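/- arXiv:2508.09969 — 5 statements merged into one kernel-verified Lean document; each statement's English description precedes it below -/
import Mathlib

section
/- Let H be a t-partite 3-uniform hypergraph with vertex parts X₁,…,X_t (t ≥ 3). (i) For every cylinder chain partition P = (P_V, P_E) of H, the mean-squared density satisfies 0 ≤ q(P) ≤ C(t,3). (ii) If a cylinder chain partition P′ refines P, then q(P′) ≥ q(P). -/
open scoped Classical

def twr : ℕ → ℕ → ℕ
  | 0, x => x
  | n + 1, x => 2 ^ twr n x

def tower (n : ℕ) : ℕ := twr n 1

variable {V : Type}

noncomputable def bipDensity [DecidableEq V] (Z : Finset (V × V)) (X Y : Finset V) : ℝ :=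
  ((Z ∩ X ×ˢ Y).card : ℝ) / ((X.card : ℝ) * (Y.card : ℝ))

def funcQuasi (X Y : Finset V) (f : V → V → ℝ) (α : ℝ) : Prop :=
  ∑ x ∈ X, ∑ x' ∈ X, ∑ y ∈ Y, ∑ y' ∈ Y, f x y * f x' y * f x y' * f x' y'
    ≤ α * (X.card : ℝ) ^ 2 * (Y.card : ℝ) ^ 2

def bipQuasi [DecidableEq V] (Z : Finset (V × V)) (X Y : Finset V) (α : ℝ) : Prop :=
  funcQuasi X Y (fun x y => (if (x, y) ∈ Z then (1 : ℝ) else 0) - bipDensity Z X Y) α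

def triangles [DecidableEq V] (Z12 Z13 Z23 : Finset (V × V)) (Y1 Y2 Y3 : Finset V) :
    Finset (V × V × V) :=
  (Y1 ×ˢ Y2 ×ˢ Y3).filter fun p =>
    (p.1, p.2.1) ∈ Z12 ∧ (p.1, p.2.2) ∈ Z13 ∧ (p.2.1, p.2.2) ∈ Z23

noncomputable def relDensity [DecidableEq V] (H : V → V → V → Prop)
    (Z12 Z13 Z23 : Finset (V × V)) (Y1 Y2 Y3 : Finset V) : ℝ :=
  (((triangles Z12 Z13 Z23 Y1 Y2 Y3).filter fun p => H p.1 p.2.1 p.2.2).card : ℝ) /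
    ((triangles Z12 Z13 Z23 Y1 Y2 Y3).card : ℝ)

noncomputable def chainFn [DecidableEq V] (H : V → V → V → Prop)
    (Z12 Z13 Z23 : Finset (V × V)) (Y1 Y2 Y3 : Finset V) (x y z : V) : ℝ :=
  if (x, y, z) ∈ triangles Z12 Z13 Z23 Y1 Y2 Y3 then
    (if H x y z then (1 : ℝ) else 0) - relDensity H Z12 Z13 Z23 Y1 Y2 Y3
  else 0

def hQuasi [DecidableEq V] (H : V → V → V → Prop) (Z12 Z13 Z23 : Finset (V × V))
    (Y1 Y2 Y3 : Finset V) (η : ℝ) : Prop :=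
  ∑ x ∈ Y1, ∑ x' ∈ Y1, ∑ y ∈ Y2, ∑ y' ∈ Y2, ∑ z ∈ Y3, ∑ z' ∈ Y3,
      chainFn H Z12 Z13 Z23 Y1 Y2 Y3 x y z * chainFn H Z12 Z13 Z23 Y1 Y2 Y3 x y z' *
        chainFn H Z12 Z13 Z23 Y1 Y2 Y3 x y' z * chainFn H Z12 Z13 Z23 Y1 Y2 Y3 x y' z' *
        chainFn H Z12 Z13 Z23 Y1 Y2 Y3 x' y z * chainFn H Z12 Z13 Z23 Y1 Y2 Y3 x' y z' *
        chainFn H Z12 Z13 Z23 Y1 Y2 Y3 x' y' z * chainFn H Z12 Z13 Z23 Y1 Y2 Y3 x' y' z'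
    ≤ η * (bipDensity Z12 Y1 Y2 * bipDensity Z13 Y1 Y3 * bipDensity Z23 Y2 Y3) ^ 4 *
        (Y1.card : ℝ) ^ 2 * (Y2.card : ℝ) ^ 2 * (Y3.card : ℝ) ^ 2

noncomputable def triProdDensity [DecidableEq V] (Z12 Z13 Z23 : Finset (V × V))
    (Y1 Y2 Y3 : Finset V) : ℝ :=
  bipDensity Z12 Y1 Y2 * bipDensity Z13 Y1 Y3 * bipDensity Z23 Y2 Y3

def triGraphQuasi [DecidableEq V] (Z12 Z13 Z23 : Finset (V × V)) (Y1 Y2 Y3 : Finset V)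
    (α : ℝ) : Prop :=
  bipQuasi Z12 Y1 Y2 α ∧ bipQuasi Z13 Y1 Y3 α ∧ bipQuasi Z23 Y2 Y3 α

def triChainQuasi [DecidableEq V] (H : V → V → V → Prop) (Z12 Z13 Z23 : Finset (V × V))
    (Y1 Y2 Y3 : Finset V) (η : ℝ) (ψ : ℝ → ℝ) : Prop :=
  hQuasi H Z12 Z13 Z23 Y1 Y2 Y3 η ∧
    triGraphQuasi Z12 Z13 Z23 Y1 Y2 Y3 (ψ (triProdDensity Z12 Z13 Z23 Y1 Y2 Y3))

def IsPolyFn (ψ : ℝ → ℝ) : Prop :=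
  ∃ c : ℝ, ∃ k : ℕ, 0 < c ∧ 1 ≤ k ∧ ∀ x : ℝ, ψ x = c * x ^ k

def IsVertexPartition (P : Finset (Finset V)) (S : Finset V) : Prop :=
  (∀ Y ∈ P, Y ⊆ S) ∧ ∀ x ∈ S, ∃! Y, Y ∈ P ∧ x ∈ Y

def IsSubPartition [DecidableEq V] (P : Finset (Finset (V × V))) (E : Finset (V × V)) : Prop :=
  (∀ Z ∈ P, Z ⊆ E) ∧ ∀ e ∈ E, ∃! Z, Z ∈ P ∧ e ∈ Z

def IsBipPartition [DecidableEq V] (P : Finset (Finset (V × V))) (X Y : Finset V) : Prop :=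
  IsSubPartition P (X ×ˢ Y)

def Is3Graph (H : Finset (Finset V)) : Prop := ∀ e ∈ H, e.card = 3

def hPred [DecidableEq V] (H : Finset (Finset V)) (x y z : V) : Prop :=
  ({x, y, z} : Finset V) ∈ H

def HasShattered [DecidableEq V] (H : Finset (Finset V)) (d : ℕ) : Prop :=
  ∃ A B : Finset V, Disjoint A B ∧ A.card = d ∧ B.card = d ∧
    ∀ S ⊆ A ×ˢ B, ∃ v : V, ∀ a ∈ A, ∀ b ∈ B, (({a, b, v} : Finset V) ∈ H ↔ (a, b) ∈ S)

def VC2dimLE [DecidableEq V] (H : Finset (Finset V)) (d : ℕ) : Prop := ¬ HasShattered H (d + 1)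

def IsChainPartition [Fintype V] [DecidableEq V] (QV : Finset (Finset V))
    (QE : Finset V → Finset V → Finset (Finset (V × V))) : Prop :=
  IsVertexPartition QV Finset.univ ∧
    ∀ Y ∈ QV, ∀ Y' ∈ QV, Y ≠ Y' → IsBipPartition (QE Y Y') Y Y'

def IsCylPartition {t : ℕ} [DecidableEq V] (PV : Finset (Fin t → Finset V))
    (X : Fin t → Finset V) : Prop :=
  (∀ Y ∈ PV, ∀ i, Y i ⊆ X i) ∧
    ∀ x ∈ Fintype.piFinset X, ∃! Y, Y ∈ PV ∧ ∀ i, x i ∈ Y i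

def tGraphQuasi {t : ℕ} [DecidableEq V] (Z : Fin t → Fin t → Finset (V × V))
    (Y : Fin t → Finset V) (α : ℝ) : Prop :=
  ∀ i j : Fin t, i < j → bipQuasi (Z i j) (Y i) (Y j) α

noncomputable def prodDensity {t : ℕ} [DecidableEq V] (Z : Fin t → Fin t → Finset (V × V))
    (Y : Fin t → Finset V) : ℝ :=
  ∏ p ∈ Finset.univ.filter (fun p : Fin t × Fin t => p.1 < p.2),
    bipDensity (Z p.1 p.2) (Y p.1) (Y p.2)

def tChainQuasi {t : ℕ} [DecidableEq V] (H : V → V → V → Prop)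
    (Z : Fin t → Fin t → Finset (V × V)) (Y : Fin t → Finset V) (η : ℝ) (ψ : ℝ → ℝ) : Prop :=
  (∀ i j k : Fin t, i < j → j < k →
      hQuasi H (Z i j) (Z i k) (Z j k) (Y i) (Y j) (Y k) η) ∧
    tGraphQuasi Z Y (ψ (prodDensity Z Y))


/-- Mean-squared density of an edge partition of the complete tripartite graph
on parts `Yi, Yj, Yk` (so that `|Δ(K)| = |Yi||Yj||Yk|`). -/
noncomputable def meanSqK {V : Type} [DecidableEq V] (H : V → V → V → Prop) (Yi Yj Yk : Finset V)
    (Pij Pik Pjk : Finset (Finset (V × V))) : ℝ :=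
  ∑ Zij ∈ Pij, ∑ Zik ∈ Pik, ∑ Zjk ∈ Pjk,
    (((triangles Zij Zik Zjk Yi Yj Yk).card : ℝ) /
        ((Yi.card : ℝ) * (Yj.card : ℝ) * (Yk.card : ℝ))) *
      relDensity H Zij Zik Zjk Yi Yj Yk ^ 2

/-- Mean-squared density of a cylinder chain partition. -/
noncomputable def qP {V : Type} {t : ℕ} [DecidableEq V] (H : V → V → V → Prop)
    (X : Fin t → Finset V) (PV : Finset (Fin t → Finset V))
    (PE : (Fin t → Finset V) → Fin t → Fin t → Finset (Finset (V × V))) : ℝ :=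
  ∑ Y ∈ PV, (∏ i, ((Y i).card : ℝ) / ((X i).card : ℝ)) *
    ∑ p ∈ Finset.univ.filter (fun p : Fin t × Fin t × Fin t => p.1 < p.2.1 ∧ p.2.1 < p.2.2),
      meanSqK H (Y p.1) (Y p.2.1) (Y p.2.2)
        (PE Y p.1 p.2.1) (PE Y p.1 p.2.2) (PE Y p.2.1 p.2.2)

/-- Refinement of cylinder chain partitions. -/
def CylRefines {V : Type} {t : ℕ} [DecidableEq V] (PV' PV : Finset (Fin t → Finset V))
    (PE' PE : (Fin t → Finset V) → Fin t → Fin t → Finset (Finset (V × V))) : Prop :=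
  (∀ Y' ∈ PV', ∃ Y ∈ PV, ∀ i, Y' i ⊆ Y i) ∧
    ∀ Y' ∈ PV', ∀ Y ∈ PV, (∀ i, Y' i ⊆ Y i) →
      ∀ i j : Fin t, i < j → ∀ Z' ∈ PE' Y' i j, ∃ Z ∈ PE Y i j, Z' ⊆ Z

/-!
Fix a triple `i < j < k`. The cylinders `Y ∈ P_V` and the cells `Z_ij, Z_ik, Z_jk` of their
edge partitions cut `X₁ × ⋯ × X_t` into blocks
`{x ∈ Y | (x_i, x_j) ∈ Z_ij, (x_i, x_k) ∈ Z_ik, (x_j, x_k) ∈ Z_jk}`, and such a block consists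
of `∏_{l ∉ {i,j,k}} |Y_l|` copies of the triangle set `Δ(Z_ij ∪ Z_ik ∪ Z_jk)`. Consequently the
`(i,j,k)`-part of `q(P)` is `(∏ |X_l|)⁻¹ ∑_B (∑_{x ∈ B} h x)² / |B|`, where `h` is the indicator
of `H (x_i) (x_j) (x_k)`: the energy of `h` on this block partition.
A refinement of `P` refines every block partition, and energy can only grow under refinement
(Jensen's inequality on each coarse block). As `0 ≤ h ≤ 1`, the energy is at most
`|X₁ × ⋯ × X_t|`, so `q(P)` is at most the number `C(t,3)` of triples.
-/

open Finset

section Blocks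
variable {α ι : Type*}

structure IsBlockMap (S : Finset α) (B : α → Finset α) : Prop where
  self_mem : ∀ x ∈ S, x ∈ B x
  subset : ∀ x ∈ S, B x ⊆ S
  eq_of_mem : ∀ x ∈ S, ∀ y ∈ B x, B y = B x

noncomputable def blockAvg (B : α → Finset α) (f : α → ℝ) (x : α) : ℝ :=
  (∑ y ∈ B x, f y) / #(B x)

namespace IsBlockMap
variable {S : Finset α} {B B' : α → Finset α}

lemma mem_comm (hB : IsBlockMap S B) (x y : α) : x ∈ S ∧ y ∈ B x ↔ x ∈ B y ∧ y ∈ S := by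
  constructor
  · rintro ⟨hx, hy⟩
    exact ⟨hB.eq_of_mem x hx y hy ▸ hB.self_mem x hx, hB.subset x hx hy⟩
  · rintro ⟨hx, hy⟩
    exact ⟨hB.subset y hy hx, hB.eq_of_mem y hy x hx ▸ hB.self_mem y hy⟩

lemma sum_blockAvg (hB : IsBlockMap S B) (φ : α → ℝ) :
    ∑ x ∈ S, blockAvg B φ x = ∑ x ∈ S, φ x :=
  calc ∑ x ∈ S, blockAvg B φ x = ∑ x ∈ S, ∑ y ∈ B x, φ y / #(B y) := by
        refine sum_congr rfl fun x hx => ?_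
        rw [blockAvg, sum_div]
        exact sum_congr rfl fun y hy => by rw [hB.eq_of_mem x hx y hy]
    _ = ∑ y ∈ S, ∑ x ∈ B y, φ y / #(B y) := sum_comm' hB.mem_comm
    _ = ∑ y ∈ S, φ y := by
        refine sum_congr rfl fun y hy => ?_
        have hne : (#(B y) : ℝ) ≠ 0 := by
          exact_mod_cast (card_pos.2 ⟨y, hB.self_mem y hy⟩).ne'
        rw [sum_const, nsmul_eq_mul, mul_div_cancel₀ _ hne]

lemma restrict (hB : IsBlockMap S B) (hB' : IsBlockMap S B') (hle : ∀ x ∈ S, B' x ⊆ B x)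
    {x : α} (hx : x ∈ S) : IsBlockMap (B x) B' where
  self_mem y hy := hB'.self_mem y (hB.subset x hx hy)
  subset y hy := hB.eq_of_mem x hx y hy ▸ hle y (hB.subset x hx hy)
  eq_of_mem y hy := hB'.eq_of_mem y (hB.subset x hx hy)

lemma sum_sq_blockAvg_le (hB : IsBlockMap S B) (hB' : IsBlockMap S B')
    (hle : ∀ x ∈ S, B' x ⊆ B x) (f : α → ℝ) :
    ∑ x ∈ S, blockAvg B f x ^ 2 ≤ ∑ x ∈ S, blockAvg B' f x ^ 2 := by
  have hfine : ∀ x ∈ S, blockAvg B f x = blockAvg B (blockAvg B' f) x := fun x hx => by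
    rw [blockAvg, blockAvg, (hB.restrict hB' hle hx).sum_blockAvg]
  calc ∑ x ∈ S, blockAvg B f x ^ 2 = ∑ x ∈ S, blockAvg B (blockAvg B' f) x ^ 2 :=
        sum_congr rfl fun x hx => by rw [hfine x hx]
    _ ≤ ∑ x ∈ S, blockAvg B (fun y => blockAvg B' f y ^ 2) x :=
        sum_le_sum fun x _ => sum_div_card_sq_le_sum_sq_div_card
    _ = ∑ x ∈ S, blockAvg B' f x ^ 2 := hB.sum_blockAvg _

end IsBlockMap

structure IsIndexedPartition (S : Finset α) (I : Finset ι) (part : ι → Finset α) : Prop where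
  subset : ∀ b ∈ I, part b ⊆ S
  existsUnique : ∀ x ∈ S, ∃! b, b ∈ I ∧ x ∈ part b

noncomputable def partitionEnergy (I : Finset ι) (part : ι → Finset α) (f : α → ℝ) : ℝ :=
  ∑ b ∈ I, (∑ x ∈ part b, f x) ^ 2 / #(part b)

noncomputable def partBlock (S : Finset α) (I : Finset ι) (part : ι → Finset α) (x : α) :
    Finset α :=
  {y ∈ S | ∃ b ∈ I, x ∈ part b ∧ y ∈ part b}

lemma partBlock_mono {S : Finset α} {I I' : Finset ι} {part part' : ι → Finset α}
    (href : ∀ b' ∈ I', ∃ b ∈ I, part' b' ⊆ part b) (x : α) :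
    partBlock S I' part' x ⊆ partBlock S I part x :=
  monotone_filter_right _ fun _ _ ⟨b', hb', hx, hy⟩ =>
    let ⟨b, hb, hsub⟩ := href b' hb'
    ⟨b, hb, hsub hx, hsub hy⟩

namespace IsIndexedPartition
variable {S : Finset α} {I I' : Finset ι} {part part' : ι → Finset α}

lemma eq_of_mem (hP : IsIndexedPartition S I part) {x : α} {b b' : ι} (hb : b ∈ I)
    (hb' : b' ∈ I) (hxb : x ∈ part b) (hxb' : x ∈ part b') : b = b' :=
  (hP.existsUnique x (hP.subset b hb hxb)).unique ⟨hb, hxb⟩ ⟨hb', hxb'⟩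

lemma sum_eq {M : Type*} [AddCommMonoid M] (hP : IsIndexedPartition S I part) (F : α → M) :
    ∑ x ∈ S, F x = ∑ b ∈ I, ∑ x ∈ part b, F x := by
  have hS : S = I.biUnion part := by
    ext x
    simp only [mem_biUnion]
    exact ⟨fun hx => (hP.existsUnique x hx).exists, fun ⟨b, hb, hx⟩ => hP.subset b hb hx⟩
  rw [hS, sum_biUnion fun b hb b' hb' hne =>
    disjoint_left.2 fun x hxb hxb' => hne (hP.eq_of_mem hb hb' hxb hxb')]

lemma partBlock_eq (hP : IsIndexedPartition S I part) {b : ι} (hb : b ∈ I) {x : α}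
    (hx : x ∈ part b) : partBlock S I part x = part b := by
  ext y
  simp only [partBlock, mem_filter]
  constructor
  · rintro ⟨-, b', hb', hxb', hyb'⟩
    rwa [hP.eq_of_mem hb hb' hx hxb']
  · exact fun hy => ⟨hP.subset b hb hy, b, hb, hx, hy⟩

lemma isBlockMap_partBlock (hP : IsIndexedPartition S I part) :
    IsBlockMap S (partBlock S I part) where
  self_mem x hx := by
    obtain ⟨b, hb, hxb⟩ := (hP.existsUnique x hx).exists
    rw [hP.partBlock_eq hb hxb]
    exact hxb
  subset _ _ := filter_subset _ _
  eq_of_mem x hx y hy := by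
    obtain ⟨b, hb, hxb⟩ := (hP.existsUnique x hx).exists
    rw [hP.partBlock_eq hb hxb] at hy ⊢
    exact hP.partBlock_eq hb hy

lemma partitionEnergy_eq (hP : IsIndexedPartition S I part) (f : α → ℝ) :
    partitionEnergy I part f = ∑ x ∈ S, blockAvg (partBlock S I part) f x ^ 2 := by
  rw [hP.sum_eq, partitionEnergy]
  refine sum_congr rfl fun b hb => ?_
  have hconst : ∀ x ∈ part b, blockAvg (partBlock S I part) f x ^ 2
      = ((∑ y ∈ part b, f y) / #(part b)) ^ 2 := fun x hx => by
    rw [blockAvg, hP.partBlock_eq hb hx]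
  rw [sum_congr rfl hconst, sum_const, nsmul_eq_mul]
  rcases eq_or_ne (#(part b) : ℝ) 0 with h | h
  · simp [h]
  · field_simp

lemma partitionEnergy_le_of_refines (hP : IsIndexedPartition S I part)
    (hP' : IsIndexedPartition S I' part') (href : ∀ b' ∈ I', ∃ b ∈ I, part' b' ⊆ part b)
    (f : α → ℝ) : partitionEnergy I part f ≤ partitionEnergy I' part' f := by
  rw [hP.partitionEnergy_eq, hP'.partitionEnergy_eq]
  exact hP.isBlockMap_partBlock.sum_sq_blockAvg_le hP'.isBlockMap_partBlock
    (fun x _ => partBlock_mono href x) f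

lemma partitionEnergy_le_card (hP : IsIndexedPartition S I part) {f : α → ℝ}
    (hf₀ : ∀ x, 0 ≤ f x) (hf₁ : ∀ x, f x ≤ 1) : partitionEnergy I part f ≤ #S := by
  rw [hP.partitionEnergy_eq, ← mul_one (#S : ℝ), ← nsmul_eq_mul]
  refine sum_le_card_nsmul _ _ _ fun x _ => pow_le_one₀ ?_ ?_
  · exact div_nonneg (sum_nonneg fun y _ => hf₀ y) (Nat.cast_nonneg _)
  · refine div_le_one_of_le₀ ?_ (Nat.cast_nonneg _)
    simpa using sum_le_sum fun y (_ : y ∈ partBlock S I part x) => hf₁ y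

end IsIndexedPartition

end Blocks

section PiFinset
variable {ι α : Type*} [DecidableEq ι] [Fintype ι] [DecidableEq α]

lemma filter_piFinset_apply₃_eq (Y : ι → Finset α) {i j k : ι} (hij : i ≠ j) (hik : i ≠ k)
    (hjk : j ≠ k) {a b c : α} (ha : a ∈ Y i) (hb : b ∈ Y j) (hc : c ∈ Y k) :
    {x ∈ Fintype.piFinset Y | (x i, x j, x k) = (a, b, c)}
      = Fintype.piFinset
          (Function.update (Function.update (Function.update Y i {a}) j {b}) k {c}) := by
  ext x
  simp only [mem_filter, Fintype.mem_piFinset, Function.update_apply, Prod.mk.injEq]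
  grind

lemma card_filter_piFinset_apply₃_mem (Y : ι → Finset α) {i j k : ι} (hij : i ≠ j)
    (hik : i ≠ k) (hjk : j ≠ k) {T : Finset (α × α × α)} (hT : T ⊆ Y i ×ˢ Y j ×ˢ Y k) :
    #{x ∈ Fintype.piFinset Y | (x i, x j, x k) ∈ T} = (∏ l ∈ {i, j, k}ᶜ, #(Y l)) * #T := by
  rw [card_eq_sum_card_fiberwise (f := fun x => (x i, x j, x k)) (t := T)
    (s := {x ∈ Fintype.piFinset Y | (x i, x j, x k) ∈ T}) fun x hx => (mem_filter.1 hx).2,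
    sum_const_nat, mul_comm]
  rintro ⟨a, b, c⟩ hp
  obtain ⟨ha, hb, hc⟩ : a ∈ Y i ∧ b ∈ Y j ∧ c ∈ Y k := by simpa using hT hp
  rw [filter_filter, filter_congr fun x _ => and_iff_right_of_imp fun h => h ▸ hp,
    filter_piFinset_apply₃_eq Y hij hik hjk ha hb hc, Fintype.card_piFinset,
    ← prod_mul_prod_compl {i, j, k}, prod_insert (by simp [hij, hik]),
    prod_insert (by simp [hjk]), prod_singleton]
  simp only [Function.update_apply, hij, hik, hjk, if_true, if_false, card_singleton, one_mul]
  refine prod_congr rfl fun l hl => ?_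
  simp only [mem_compl, mem_insert, mem_singleton, not_or] at hl
  simp only [hl.1, hl.2.1, hl.2.2, if_false]

end PiFinset

def orderedTriples (t : ℕ) : Finset (Fin t × Fin t × Fin t) :=
  {p | p.1 < p.2.1 ∧ p.2.1 < p.2.2}

lemma card_orderedTriples_le (t : ℕ) : #(orderedTriples t) ≤ t.choose 3 := by
  calc #(orderedTriples t)
      ≤ #(powersetCard 3 (univ : Finset (Fin t))) := by
        refine card_le_card_of_injOn (fun p => {p.1, p.2.1, p.2.2}) (fun p hp => ?_) ?_
        · obtain ⟨h₁, h₂⟩ := (mem_filter.1 hp).2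
          exact mem_powersetCard.2 ⟨subset_univ _, card_eq_three.2
            ⟨_, _, _, h₁.ne, (h₁.trans h₂).ne, h₂.ne, rfl⟩⟩
        · rintro ⟨a, b, c⟩ hp ⟨d, e, f⟩ hq he
          simp only [orderedTriples, coe_filter, mem_univ, true_and, Set.mem_ofPred_eq] at hp hq
          simp only [Finset.ext_iff, mem_insert, mem_singleton] at he
          have := he a; have := he b; have := he c; have := he d; have := he e; have := he f
          simp only [true_or, or_true, iff_true, true_iff, Fin.ext_iff, Fin.lt_def,
            Prod.mk.injEq] at *
          omega
    _ = t.choose 3 := by simp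

section CylinderChain
variable {V : Type} [DecidableEq V] {t : ℕ}

abbrev EdgeCell (V : Type) := Finset (V × V) × Finset (V × V) × Finset (V × V)

noncomputable def cellBlock (i j k : Fin t) (Y : Fin t → Finset V) (Z : EdgeCell V) :
    Finset (Fin t → V) :=
  {x ∈ Fintype.piFinset Y | (x i, x j) ∈ Z.1 ∧ (x i, x k) ∈ Z.2.1 ∧ (x j, x k) ∈ Z.2.2}

def cylinderCells (i j k : Fin t) (PV : Finset (Fin t → Finset V))
    (PE : (Fin t → Finset V) → Fin t → Fin t → Finset (Finset (V × V))) :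
    Finset (Σ _ : Fin t → Finset V, EdgeCell V) :=
  PV.sigma fun Y => PE Y i j ×ˢ PE Y i k ×ˢ PE Y j k

lemma mem_cellBlock {i j k : Fin t} {Y : Fin t → Finset V} {Z : EdgeCell V} {x : Fin t → V} :
    x ∈ cellBlock i j k Y Z ↔
      (∀ l, x l ∈ Y l) ∧ (x i, x j) ∈ Z.1 ∧ (x i, x k) ∈ Z.2.1 ∧ (x j, x k) ∈ Z.2.2 := by
  simp [cellBlock]

lemma isIndexedPartition_cellBlock {X : Fin t → Finset V} {PV : Finset (Fin t → Finset V)}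
    {PE : (Fin t → Finset V) → Fin t → Fin t → Finset (Finset (V × V))}
    (hPV : IsCylPartition PV X)
    (hPE : ∀ Y ∈ PV, ∀ i j : Fin t, i < j → IsBipPartition (PE Y i j) (Y i) (Y j))
    {i j k : Fin t} (hij : i < j) (hjk : j < k) :
    IsIndexedPartition (Fintype.piFinset X) (cylinderCells i j k PV PE)
      fun c => cellBlock i j k c.1 c.2 where
  subset c hc := (filter_subset _ _).trans <|
    Fintype.piFinset_subset _ _ (hPV.1 c.1 (mem_sigma.1 hc).1)
  existsUnique x hx := by
    obtain ⟨Y, ⟨hY, hxY⟩, hYu⟩ := hPV.2 x hx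
    have hcell : ∀ p q, p < q → ∃! Z, Z ∈ PE Y p q ∧ (x p, x q) ∈ Z := fun p q hpq =>
      (hPE Y hY p q hpq).2 _ (mem_product.2 ⟨hxY p, hxY q⟩)
    obtain ⟨Zij, hZij, hZiju⟩ := hcell i j hij
    obtain ⟨Zik, hZik, hZiku⟩ := hcell i k (hij.trans hjk)
    obtain ⟨Zjk, hZjk, hZjku⟩ := hcell j k hjk
    refine ⟨⟨Y, Zij, Zik, Zjk⟩, ⟨?_, ?_⟩, ?_⟩
    · simp [cylinderCells, hY, hZij.1, hZik.1, hZjk.1]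
    · exact mem_cellBlock.2 ⟨hxY, hZij.2, hZik.2, hZjk.2⟩
    · rintro ⟨Y', Z'ij, Z'ik, Z'jk⟩ ⟨hc, hxc⟩
      simp only [cylinderCells, mem_sigma, mem_product] at hc
      obtain ⟨hxY', hx'ij, hx'ik, hx'jk⟩ := mem_cellBlock.1 hxc
      obtain rfl := hYu Y' ⟨hc.1, hxY'⟩
      rw [hZiju Z'ij ⟨hc.2.1, hx'ij⟩, hZiku Z'ik ⟨hc.2.2.1, hx'ik⟩,
        hZjku Z'jk ⟨hc.2.2.2, hx'jk⟩]

lemma exists_cellBlock_superset_of_cylRefines {PV PV' : Finset (Fin t → Finset V)}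
    {PE PE' : (Fin t → Finset V) → Fin t → Fin t → Finset (Finset (V × V))}
    (href : CylRefines PV' PV PE' PE) {i j k : Fin t} (hij : i < j) (hjk : j < k) :
    ∀ c' ∈ cylinderCells i j k PV' PE', ∃ c ∈ cylinderCells i j k PV PE,
      cellBlock i j k c'.1 c'.2 ⊆ cellBlock i j k c.1 c.2 := by
  rintro ⟨Y', Z'ij, Z'ik, Z'jk⟩ hc'
  simp only [cylinderCells, mem_sigma, mem_product] at hc'
  obtain ⟨Y, hY, hY'Y⟩ := href.1 Y' hc'.1
  obtain ⟨Zij, hZij, hij'⟩ := href.2 Y' hc'.1 Y hY hY'Y i j hij Z'ij hc'.2.1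
  obtain ⟨Zik, hZik, hik'⟩ := href.2 Y' hc'.1 Y hY hY'Y i k (hij.trans hjk) Z'ik hc'.2.2.1
  obtain ⟨Zjk, hZjk, hjk'⟩ := href.2 Y' hc'.1 Y hY hY'Y j k hjk Z'jk hc'.2.2.2
  refine ⟨⟨Y, Zij, Zik, Zjk⟩, by simp [cylinderCells, hY, hZij, hZik, hZjk], fun x hx => ?_⟩
  obtain ⟨hxY', hxij, hxik, hxjk⟩ := mem_cellBlock.1 hx
  exact mem_cellBlock.2 ⟨fun l => hY'Y l (hxY' l), hij' hxij, hik' hxik, hjk' hxjk⟩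

lemma card_filter_cellBlock (P : V → V → V → Prop) (Y : Fin t → Finset V) {i j k : Fin t}
    (hij : i ≠ j) (hik : i ≠ k) (hjk : j ≠ k) (Z : EdgeCell V) :
    #{x ∈ cellBlock i j k Y Z | P (x i) (x j) (x k)}
      = (∏ l ∈ {i, j, k}ᶜ, #(Y l)) *
          #{p ∈ triangles Z.1 Z.2.1 Z.2.2 (Y i) (Y j) (Y k) | P p.1 p.2.1 p.2.2} := by
  rw [← card_filter_piFinset_apply₃_mem Y hij hik hjk
    (T := {p ∈ triangles Z.1 Z.2.1 Z.2.2 (Y i) (Y j) (Y k) | P p.1 p.2.1 p.2.2})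
    ((filter_subset _ _).trans (filter_subset _ _))]
  congr 1
  ext x
  simp only [cellBlock, triangles, mem_filter, mem_product, Fintype.mem_piFinset]
  grind

lemma card_cellBlock (Y : Fin t → Finset V) {i j k : Fin t} (hij : i ≠ j) (hik : i ≠ k)
    (hjk : j ≠ k) (Z : EdgeCell V) :
    #(cellBlock i j k Y Z)
      = (∏ l ∈ {i, j, k}ᶜ, #(Y l)) * #(triangles Z.1 Z.2.1 Z.2.2 (Y i) (Y j) (Y k)) := by
  simpa using card_filter_cellBlock (fun _ _ _ => True) Y hij hik hjk Z

end CylinderChain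

lemma prod_card_eq_mul_prod_compl {V : Type} {t : ℕ} (Y : Fin t → Finset V) {i j k : Fin t}
    (hij : i ≠ j) (hik : i ≠ k) (hjk : j ≠ k) :
    ∏ l, (#(Y l) : ℝ) = #(Y i) * #(Y j) * #(Y k) * ∏ l ∈ {i, j, k}ᶜ, (#(Y l) : ℝ) := by
  rw [← prod_mul_prod_compl {i, j, k}, prod_insert (by simp [hij, hik]),
    prod_insert (by simp [hjk]), prod_singleton, ← mul_assoc]

lemma mul_div_mul_sq_div_eq {P D m Δ h : ℝ} (hΔ : D = 0 → Δ = 0) :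
    D * m / P * (Δ / D * (h / Δ) ^ 2) = P⁻¹ * ((m * h) ^ 2 / (m * Δ)) := by
  rcases eq_or_ne D 0 with rfl | hD
  · simp [hΔ rfl]
  rcases eq_or_ne Δ 0 with rfl | hΔ0
  · simp
  rcases eq_or_ne m 0 with rfl | hm
  · simp
  field_simp

section Identity
variable {V : Type} [DecidableEq V] {t : ℕ}

lemma weight_mul_cellTerm_eq (H : V → V → V → Prop) (X Y : Fin t → Finset V) {i j k : Fin t}
    (hij : i ≠ j) (hik : i ≠ k) (hjk : j ≠ k) (Z : EdgeCell V) :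
    (∏ l, (#(Y l) : ℝ) / #(X l)) *
        ((#(triangles Z.1 Z.2.1 Z.2.2 (Y i) (Y j) (Y k)) : ℝ) / (#(Y i) * #(Y j) * #(Y k)) *
          relDensity H Z.1 Z.2.1 Z.2.2 (Y i) (Y j) (Y k) ^ 2)
      = (∏ l, (#(X l) : ℝ))⁻¹ *
          ((∑ x ∈ cellBlock i j k Y Z, if H (x i) (x j) (x k) then (1 : ℝ) else 0) ^ 2 /
            #(cellBlock i j k Y Z)) := by
  have hΔ : #(triangles Z.1 Z.2.1 Z.2.2 (Y i) (Y j) (Y k)) ≤ #(Y i) * #(Y j) * #(Y k) := by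
    rw [mul_assoc, ← card_product, ← card_product]
    exact card_le_card (filter_subset _ _)
  rw [sum_boole, card_filter_cellBlock _ Y hij hik hjk, card_cellBlock Y hij hik hjk,
    relDensity, prod_div_distrib, prod_card_eq_mul_prod_compl Y hij hik hjk]
  push_cast
  refine mul_div_mul_sq_div_eq fun hD => ?_
  norm_cast at hD ⊢
  omega

noncomputable def cellEnergy (H : V → V → V → Prop) (PV : Finset (Fin t → Finset V))
    (PE : (Fin t → Finset V) → Fin t → Fin t → Finset (Finset (V × V))) (i j k : Fin t) : ℝ :=
  partitionEnergy (cylinderCells i j k PV PE) (fun c => cellBlock i j k c.1 c.2)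
    fun x => if H (x i) (x j) (x k) then 1 else 0

lemma sum_weight_mul_meanSqK_eq (H : V → V → V → Prop) (X : Fin t → Finset V)
    (PV : Finset (Fin t → Finset V))
    (PE : (Fin t → Finset V) → Fin t → Fin t → Finset (Finset (V × V))) {i j k : Fin t}
    (hij : i ≠ j) (hik : i ≠ k) (hjk : j ≠ k) :
    ∑ Y ∈ PV, (∏ l, (#(Y l) : ℝ) / #(X l)) *
        meanSqK H (Y i) (Y j) (Y k) (PE Y i j) (PE Y i k) (PE Y j k)
      = (∏ l, (#(X l) : ℝ))⁻¹ * cellEnergy H PV PE i j k := by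
  simp only [cellEnergy, partitionEnergy, cylinderCells, sum_sigma, sum_product, meanSqK, mul_sum]
  exact sum_congr rfl fun Y _ => sum_congr rfl fun Zij _ => sum_congr rfl fun Zik _ =>
    sum_congr rfl fun Zjk _ => weight_mul_cellTerm_eq H X Y hij hik hjk (Zij, Zik, Zjk)

lemma qP_eq_inv_mul_sum_cellEnergy (H : V → V → V → Prop) (X : Fin t → Finset V)
    (PV : Finset (Fin t → Finset V))
    (PE : (Fin t → Finset V) → Fin t → Fin t → Finset (Finset (V × V))) :
    qP H X PV PE = (∏ l, (#(X l) : ℝ))⁻¹ *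
      ∑ p ∈ orderedTriples t, cellEnergy H PV PE p.1 p.2.1 p.2.2 := by
  simp only [qP, mul_sum]
  rw [sum_comm]
  refine sum_congr rfl fun p hp => ?_
  obtain ⟨h₁, h₂⟩ := (mem_filter.1 hp).2
  exact sum_weight_mul_meanSqK_eq H X PV PE h₁.ne (h₁.trans h₂).ne h₂.ne

end Identity

section MeanSquareDensity
variable {V : Type} [DecidableEq V] {t : ℕ} {H : V → V → V → Prop} {X : Fin t → Finset V}
  {PV : Finset (Fin t → Finset V)}
  {PE : (Fin t → Finset V) → Fin t → Fin t → Finset (Finset (V × V))}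

lemma cellEnergy_le_prod_card (hPV : IsCylPartition PV X)
    (hPE : ∀ Y ∈ PV, ∀ i j : Fin t, i < j → IsBipPartition (PE Y i j) (Y i) (Y j))
    {i j k : Fin t} (hij : i < j) (hjk : j < k) :
    cellEnergy H PV PE i j k ≤ ∏ l, (#(X l) : ℝ) := by
  have hle := (isIndexedPartition_cellBlock hPV hPE hij hjk).partitionEnergy_le_card
    (f := fun x => if H (x i) (x j) (x k) then 1 else 0)
    (fun x => by split_ifs <;> norm_num) (fun x => by split_ifs <;> norm_num)
  rwa [Fintype.card_piFinset, Nat.cast_prod] at hle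

lemma cellEnergy_le_of_cylRefines (hPV : IsCylPartition PV X)
    (hPE : ∀ Y ∈ PV, ∀ i j : Fin t, i < j → IsBipPartition (PE Y i j) (Y i) (Y j))
    {PV' : Finset (Fin t → Finset V)}
    {PE' : (Fin t → Finset V) → Fin t → Fin t → Finset (Finset (V × V))}
    (hPV' : IsCylPartition PV' X)
    (hPE' : ∀ Y ∈ PV', ∀ i j : Fin t, i < j → IsBipPartition (PE' Y i j) (Y i) (Y j))
    (href : CylRefines PV' PV PE' PE) {i j k : Fin t} (hij : i < j) (hjk : j < k) :
    cellEnergy H PV PE i j k ≤ cellEnergy H PV' PE' i j k :=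
  (isIndexedPartition_cellBlock hPV hPE hij hjk).partitionEnergy_le_of_refines
    (isIndexedPartition_cellBlock hPV' hPE' hij hjk)
    (exists_cellBlock_superset_of_cylRefines href hij hjk) _

lemma qP_nonneg : 0 ≤ qP H X PV PE := by
  unfold qP meanSqK
  positivity

lemma qP_le_choose (hPV : IsCylPartition PV X)
    (hPE : ∀ Y ∈ PV, ∀ i j : Fin t, i < j → IsBipPartition (PE Y i j) (Y i) (Y j)) :
    qP H X PV PE ≤ t.choose 3 := by
  have hE : ∀ p ∈ orderedTriples t, cellEnergy H PV PE p.1 p.2.1 p.2.2 ≤ ∏ l, (#(X l) : ℝ) :=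
    fun p hp => cellEnergy_le_prod_card hPV hPE (mem_filter.1 hp).2.1 (mem_filter.1 hp).2.2
  calc qP H X PV PE ≤ (∏ l, (#(X l) : ℝ))⁻¹ * (#(orderedTriples t) * ∏ l, (#(X l) : ℝ)) := by
        rw [qP_eq_inv_mul_sum_cellEnergy]
        gcongr
        simpa using sum_le_card_nsmul _ _ _ hE
    _ ≤ #(orderedTriples t) := by
        rcases eq_or_ne (∏ l, (#(X l) : ℝ)) 0 with hX | hX
        · simp [hX]
        · rw [mul_comm, mul_assoc, mul_inv_cancel₀ hX, mul_one]
    _ ≤ t.choose 3 := by exact_mod_cast card_orderedTriples_le t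

lemma qP_le_qP_of_cylRefines (hPV : IsCylPartition PV X)
    (hPE : ∀ Y ∈ PV, ∀ i j : Fin t, i < j → IsBipPartition (PE Y i j) (Y i) (Y j))
    {PV' : Finset (Fin t → Finset V)}
    {PE' : (Fin t → Finset V) → Fin t → Fin t → Finset (Finset (V × V))}
    (hPV' : IsCylPartition PV' X)
    (hPE' : ∀ Y ∈ PV', ∀ i j : Fin t, i < j → IsBipPartition (PE' Y i j) (Y i) (Y j))
    (href : CylRefines PV' PV PE' PE) : qP H X PV PE ≤ qP H X PV' PE' := by
  rw [qP_eq_inv_mul_sum_cellEnergy, qP_eq_inv_mul_sum_cellEnergy]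
  gcongr with p hp
  exact cellEnergy_le_of_cylRefines hPV hPE hPV' hPE' href (mem_filter.1 hp).2.1
    (mem_filter.1 hp).2.2

end MeanSquareDensity

theorem qP_bounds_and_monotone_general (t : ℕ) (V : Type) [DecidableEq V]
    (X : Fin t → Finset V)
    (H : V → V → V → Prop)
    (PV : Finset (Fin t → Finset V))
    (PE : (Fin t → Finset V) → Fin t → Fin t → Finset (Finset (V × V)))
    (hPV : IsCylPartition PV X)
    (hPE : ∀ Y ∈ PV, ∀ i j : Fin t, i < j → IsBipPartition (PE Y i j) (Y i) (Y j)) :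
    (0 ≤ qP H X PV PE ∧ qP H X PV PE ≤ (t.choose 3 : ℝ)) ∧
    ∀ (PV' : Finset (Fin t → Finset V))
      (PE' : (Fin t → Finset V) → Fin t → Fin t → Finset (Finset (V × V))),
      IsCylPartition PV' X →
      (∀ Y ∈ PV', ∀ i j : Fin t, i < j → IsBipPartition (PE' Y i j) (Y i) (Y j)) →
      CylRefines PV' PV PE' PE →
      qP H X PV PE ≤ qP H X PV' PE' :=
  ⟨⟨qP_nonneg, qP_le_choose hPV hPE⟩, fun _ _ hPV' hPE' href =>
    qP_le_qP_of_cylRefines hPV hPE hPV' hPE' href⟩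

/-- (i) 0 ≤ q(P) ≤ C(t,3); (ii) q is monotone under refinement of cylinder chain partitions. -/
theorem qP_bounds_and_monotone (t : ℕ) (ht : 3 ≤ t) (V : Type) [Fintype V] [DecidableEq V]
    (X : Fin t → Finset V) (hdisj : ∀ i j : Fin t, i ≠ j → Disjoint (X i) (X j))
    (H : V → V → V → Prop)
    (hsym1 : ∀ x y z, H x y z ↔ H y x z) (hsym2 : ∀ x y z, H x y z ↔ H x z y)
    (PV : Finset (Fin t → Finset V))
    (PE : (Fin t → Finset V) → Fin t → Fin t → Finset (Finset (V × V)))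
    (hPV : IsCylPartition PV X)
    (hPE : ∀ Y ∈ PV, ∀ i j : Fin t, i < j → IsBipPartition (PE Y i j) (Y i) (Y j)) :
    (0 ≤ qP H X PV PE ∧ qP H X PV PE ≤ (t.choose 3 : ℝ)) ∧
    ∀ (PV' : Finset (Fin t → Finset V))
      (PE' : (Fin t → Finset V) → Fin t → Fin t → Finset (Finset (V × V))),
      IsCylPartition PV' X →
      (∀ Y ∈ PV', ∀ i j : Fin t, i < j → IsBipPartition (PE' Y i j) (Y i) (Y j)) →
      CylRefines PV' PV PE' PE →
      qP H X PV PE ≤ qP H X PV' PE' :=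
  qP_bounds_and_monotone_general t V X H PV PE hPV hPE
end

section
/- Let G be a tripartite graph on parts A, B, C, let H₀ be a tripartite 3-uniform hypergraph all of whose hyperedges are triangles of G, and let γ > 0. Suppose A, B, C are partitioned into A₁,…,A_K, B₁,…,B_K, C₁,…,C_K respectively, and each bipartite graph G[A_i × B_j], G[A_i × C_j], G[B_i × C_j] is further partitioned into K bipartite subgraphs. Sample a triangle (x,y,z) of G uniformly at random, and let T = G_μ[A_i × B_j] ∪ G_ν[A_i × C_k] ∪ G_ξ[B_j × C_k] be the unique tripartite subgraph from these partitions containing it. If d(H₀|G) < γ, then with probability at least 1 − √γ, d(H₀|T) < √γ. Similarly, if d(H₀|G) > 1 − γ, then with probability at least 1 − √γ, d(H₀|T) > 1 − √γ. -/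
open scoped Classical

variable {V : Type}

lemma mem_triangles_iff [DecidableEq V] {Z12 Z13 Z23 : Finset (V × V)} {Y1 Y2 Y3 : Finset V}
    {p : V × V × V} : p ∈ triangles Z12 Z13 Z23 Y1 Y2 Y3 ↔
      p.1 ∈ Y1 ∧ p.2.1 ∈ Y2 ∧ p.2.2 ∈ Y3 ∧
        (p.1, p.2.1) ∈ Z12 ∧ (p.1, p.2.2) ∈ Z13 ∧ (p.2.1, p.2.2) ∈ Z23 := by
  simp [triangles, Finset.mem_filter, Finset.mem_product, and_assoc]

lemma relDensity_mem_eq [DecidableEq V] (He : Finset (V × V × V))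
    (Z12 Z13 Z23 : Finset (V × V)) (Y1 Y2 Y3 : Finset V) :
    relDensity (fun x y z => (x, y, z) ∈ He) Z12 Z13 Z23 Y1 Y2 Y3 =
      (((triangles Z12 Z13 Z23 Y1 Y2 Y3).filter
          (fun p => (p.1, p.2.1, p.2.2) ∈ He)).card : ℝ) /
        ((triangles Z12 Z13 Z23 Y1 Y2 Y3).card : ℝ) := by
  rw [relDensity]
  congr 1
  norm_cast
  rw [Finset.filter_congr_decidable]

lemma relDensity_markov_lower [DecidableEq V] {He : Finset (V × V × V)}
    {Z12 Z13 Z23 : Finset (V × V)} {Y1 Y2 Y3 : Finset V} {d : ℝ}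
    (h : d ≤ relDensity (fun x y z => (x, y, z) ∈ He) Z12 Z13 Z23 Y1 Y2 Y3) :
    d * ((triangles Z12 Z13 Z23 Y1 Y2 Y3).card : ℝ) ≤
      (((triangles Z12 Z13 Z23 Y1 Y2 Y3).filter
        (fun p => (p.1, p.2.1, p.2.2) ∈ He)).card : ℝ) := by
  rw [relDensity_mem_eq] at h
  by_cases hb : (triangles Z12 Z13 Z23 Y1 Y2 Y3).card = 0
  · simp [hb]
  · have hb' : (0 : ℝ) < (triangles Z12 Z13 Z23 Y1 Y2 Y3).card := by
      exact_mod_cast Nat.pos_of_ne_zero hb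
    exact (le_div_iff₀ hb').mp h

lemma relDensity_markov_upper [DecidableEq V] {He : Finset (V × V × V)}
    {Z12 Z13 Z23 : Finset (V × V)} {Y1 Y2 Y3 : Finset V} {d : ℝ}
    (h : relDensity (fun x y z => (x, y, z) ∈ He) Z12 Z13 Z23 Y1 Y2 Y3 ≤ 1 - d) :
    d * ((triangles Z12 Z13 Z23 Y1 Y2 Y3).card : ℝ) ≤
      ((triangles Z12 Z13 Z23 Y1 Y2 Y3).card : ℝ) -
      (((triangles Z12 Z13 Z23 Y1 Y2 Y3).filter
        (fun p => (p.1, p.2.1, p.2.2) ∈ He)).card : ℝ) := by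
  rw [relDensity_mem_eq] at h
  by_cases hb : (triangles Z12 Z13 Z23 Y1 Y2 Y3).card = 0
  · have h0 : ((triangles Z12 Z13 Z23 Y1 Y2 Y3).filter
        (fun p => (p.1, p.2.1, p.2.2) ∈ He)).card = 0 :=
      Nat.le_zero.mp (hb ▸ Finset.card_filter_le _ _)
    simp [hb, h0]
  · have hb' : (0 : ℝ) < (triangles Z12 Z13 Z23 Y1 Y2 Y3).card := by
      exact_mod_cast Nat.pos_of_ne_zero hb
    rw [div_le_iff₀ hb'] at h
    nlinarith

/-- Partitioning a chain with relative density close to 0 (resp. 1) keeps almost all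
triangles in subchains of relative density close to 0 (resp. 1). -/
theorem arbitrary_partition_keeps_01 (V : Type) [DecidableEq V] (A B C : Finset V)
    (hAB : Disjoint A B) (hAC : Disjoint A C) (hBC : Disjoint B C)
    (E12 E13 E23 : Finset (V × V))
    (hE12 : E12 ⊆ A ×ˢ B) (hE13 : E13 ⊆ A ×ˢ C) (hE23 : E23 ⊆ B ×ˢ C)
    (He : Finset (V × V × V)) (hHe : He ⊆ triangles E12 E13 E23 A B C)
    (γ : ℝ) (hγ : 0 < γ)
    (K : ℕ) (PA PB PC : Fin K → Finset V)
    (hPAsub : ∀ i, PA i ⊆ A) (hPAcov : ∀ a ∈ A, ∃! i, a ∈ PA i)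
    (hPBsub : ∀ j, PB j ⊆ B) (hPBcov : ∀ b ∈ B, ∃! j, b ∈ PB j)
    (hPCsub : ∀ k, PC k ⊆ C) (hPCcov : ∀ c ∈ C, ∃! k, c ∈ PC k)
    (GAB : Fin K → Fin K → Fin K → Finset (V × V))
    (hGABsub : ∀ i j μ, GAB i j μ ⊆ E12 ∩ PA i ×ˢ PB j)
    (hGABcov : ∀ i j, ∀ e ∈ E12 ∩ PA i ×ˢ PB j, ∃! μ, e ∈ GAB i j μ)
    (GAC : Fin K → Fin K → Fin K → Finset (V × V))
    (hGACsub : ∀ i k ν, GAC i k ν ⊆ E13 ∩ PA i ×ˢ PC k)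
    (hGACcov : ∀ i k, ∀ e ∈ E13 ∩ PA i ×ˢ PC k, ∃! ν, e ∈ GAC i k ν)
    (GBC : Fin K → Fin K → Fin K → Finset (V × V))
    (hGBCsub : ∀ j k ξ, GBC j k ξ ⊆ E23 ∩ PB j ×ˢ PC k)
    (hGBCcov : ∀ j k, ∀ e ∈ E23 ∩ PB j ×ˢ PC k, ∃! ξ, e ∈ GBC j k ξ) :
    (relDensity (fun x y z => (x, y, z) ∈ He) E12 E13 E23 A B C < γ →
      (1 - Real.sqrt γ) * ((triangles E12 E13 E23 A B C).card : ℝ) ≤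
        (((triangles E12 E13 E23 A B C).filter fun p =>
          ∀ i j k μ ν ξ, p.1 ∈ PA i → p.2.1 ∈ PB j → p.2.2 ∈ PC k →
            (p.1, p.2.1) ∈ GAB i j μ → (p.1, p.2.2) ∈ GAC i k ν →
            (p.2.1, p.2.2) ∈ GBC j k ξ →
              relDensity (fun x y z => (x, y, z) ∈ He) (GAB i j μ) (GAC i k ν) (GBC j k ξ)
                  (PA i) (PB j) (PC k) < Real.sqrt γ).card : ℝ)) ∧
    (1 - γ < relDensity (fun x y z => (x, y, z) ∈ He) E12 E13 E23 A B C →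
      (1 - Real.sqrt γ) * ((triangles E12 E13 E23 A B C).card : ℝ) ≤
        (((triangles E12 E13 E23 A B C).filter fun p =>
          ∀ i j k μ ν ξ, p.1 ∈ PA i → p.2.1 ∈ PB j → p.2.2 ∈ PC k →
            (p.1, p.2.1) ∈ GAB i j μ → (p.1, p.2.2) ∈ GAC i k ν →
            (p.2.1, p.2.2) ∈ GBC j k ξ →
              1 - Real.sqrt γ < relDensity (fun x y z => (x, y, z) ∈ He)
                  (GAB i j μ) (GAC i k ν) (GBC j k ξ) (PA i) (PB j) (PC k)).card : ℝ)) := by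

  classical
  set d := Real.sqrt γ with hd
  have hd0 : 0 < d := Real.sqrt_pos.mpr hγ
  have hdd : d * d = γ := Real.mul_self_sqrt hγ.le
  set T := triangles E12 E13 E23 A B C with hT
  let cell : Fin K × Fin K × Fin K × Fin K × Fin K × Fin K → Finset (V × V × V) := fun t =>
    triangles (GAB t.1 t.2.1 t.2.2.2.1) (GAC t.1 t.2.2.1 t.2.2.2.2.1)
      (GBC t.2.1 t.2.2.1 t.2.2.2.2.2) (PA t.1) (PB t.2.1) (PC t.2.2.1)
  have mem_cell : ∀ (p : V × V × V) t, p ∈ cell t ↔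
      p.1 ∈ PA t.1 ∧ p.2.1 ∈ PB t.2.1 ∧ p.2.2 ∈ PC t.2.2.1 ∧
        (p.1, p.2.1) ∈ GAB t.1 t.2.1 t.2.2.2.1 ∧ (p.1, p.2.2) ∈ GAC t.1 t.2.2.1 t.2.2.2.2.1 ∧
        (p.2.1, p.2.2) ∈ GBC t.2.1 t.2.2.1 t.2.2.2.2.2 := by
    intro p t
    exact mem_triangles_iff
  have hcellsub : ∀ t, cell t ⊆ T := by
    intro t p hp
    rw [mem_cell] at hp
    obtain ⟨h1, h2, h3, h4, h5, h6⟩ := hp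
    rw [hT, mem_triangles_iff]
    exact ⟨hPAsub _ h1, hPBsub _ h2, hPCsub _ h3,
      (Finset.mem_inter.mp (hGABsub _ _ _ h4)).1,
      (Finset.mem_inter.mp (hGACsub _ _ _ h5)).1,
      (Finset.mem_inter.mp (hGBCsub _ _ _ h6)).1⟩
  have hexu : ∀ p ∈ T, ∃! t, p ∈ cell t := by
    intro p hp
    rw [hT, mem_triangles_iff] at hp
    obtain ⟨hA, hB, hC, h12, h13, h23⟩ := hp
    obtain ⟨i, hi, hiu⟩ := hPAcov p.1 hA
    obtain ⟨j, hj, hju⟩ := hPBcov p.2.1 hB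
    obtain ⟨k, hk, hku⟩ := hPCcov p.2.2 hC
    obtain ⟨μ, hμ, hμu⟩ := hGABcov i j (p.1, p.2.1)
      (Finset.mem_inter.mpr ⟨h12, Finset.mem_product.mpr ⟨hi, hj⟩⟩)
    obtain ⟨ν, hν, hνu⟩ := hGACcov i k (p.1, p.2.2)
      (Finset.mem_inter.mpr ⟨h13, Finset.mem_product.mpr ⟨hi, hk⟩⟩)
    obtain ⟨ξ, hξ, hξu⟩ := hGBCcov j k (p.2.1, p.2.2)
      (Finset.mem_inter.mpr ⟨h23, Finset.mem_product.mpr ⟨hj, hk⟩⟩)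
    refine ⟨(i, j, k, μ, ν, ξ), (mem_cell p _).mpr ⟨hi, hj, hk, hμ, hν, hξ⟩, ?_⟩
    rintro ⟨i', j', k', μ', ν', ξ'⟩ ht'
    rw [mem_cell] at ht'
    obtain ⟨hi', hj', hk', hμ', hν', hξ'⟩ := ht'
    have ei : i' = i := hiu i' hi'
    have ej : j' = j := hju j' hj'
    have ek : k' = k := hku k' hk'
    subst ei; subst ej; subst ek
    have eμ : μ' = μ := hμu μ' hμ'
    have eν : ν' = ν := hνu ν' hν'
    have eξ : ξ' = ξ := hξu ξ' hξ'
    simp [eμ, eν, eξ]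
  have hdisj : ∀ t1 t2, t1 ≠ t2 → Disjoint (cell t1) (cell t2) := by
    intro t1 t2 hne
    refine Finset.disjoint_left.mpr fun p h1 h2 => hne ?_
    obtain ⟨t, _, hu⟩ := hexu p (hcellsub t1 h1)
    exact (hu t1 h1).trans (hu t2 h2).symm
  have hTeq : T = Finset.univ.biUnion cell := by
    ext p
    constructor
    · intro hp
      obtain ⟨t, ht, _⟩ := hexu p hp
      exact Finset.mem_biUnion.mpr ⟨t, Finset.mem_univ _, ht⟩
    · intro hp
      obtain ⟨t, _, ht⟩ := Finset.mem_biUnion.mp hp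
      exact hcellsub t ht
  set N : ℝ := (T.card : ℝ) with hN
  have hN0 : 0 ≤ N := Nat.cast_nonneg _
  set F : ℝ := ((T.filter (fun p => (p.1, p.2.1, p.2.2) ∈ He)).card : ℝ) with hF
  have hFle : F ≤ N := by
    rw [hF, hN]
    exact_mod_cast Finset.card_le_card (Finset.filter_subset _ _)
  have hF0 : 0 ≤ F := Nat.cast_nonneg _
  have hsum_a : ∑ t, ((cell t).card : ℝ) = N := by
    rw [hN, hTeq, Finset.card_biUnion (fun t1 _ t2 _ h => hdisj t1 t2 h)]
    push_cast
    rfl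
  have hsum_h :
      ∑ t, (((cell t).filter (fun p => (p.1, p.2.1, p.2.2) ∈ He)).card : ℝ) = F := by
    rw [hF, hTeq, Finset.filter_biUnion,
      Finset.card_biUnion (fun t1 _ t2 _ h =>
        (hdisj t1 t2 h).mono (Finset.filter_subset _ _) (Finset.filter_subset _ _))]
    push_cast
    rfl
  have hrelG : relDensity (fun x y z => (x, y, z) ∈ He) E12 E13 E23 A B C = F / N := by
    rw [relDensity_mem_eq, hF, hN, hT]
  have core : ∀ (cond : V × V × V → Prop) (inst : DecidablePred cond)
      (w : Fin K × Fin K × Fin K × Fin K × Fin K × Fin K → ℝ),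
      (∀ t, 0 ≤ w t) → (∑ t, w t ≤ γ * N) →
      (∀ p ∈ T, ¬ cond p → ∃ t, p ∈ cell t ∧ d * ((cell t).card : ℝ) ≤ w t) →
      (1 - d) * N ≤ ((@Finset.filter _ cond inst T).card : ℝ) := by
    intro cond inst w hw0 hwsum hbad
    set S := Finset.univ.filter (fun t => d * ((cell t).card : ℝ) ≤ w t) with hS
    have hBsub : T.filter (fun p => ¬ cond p) ⊆ S.biUnion cell := by
      intro p hp
      rw [Finset.mem_filter] at hp
      obtain ⟨t, htp, htw⟩ := hbad p hp.1 hp.2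
      exact Finset.mem_biUnion.mpr ⟨t, Finset.mem_filter.mpr ⟨Finset.mem_univ _, htw⟩, htp⟩
    have hBcard : (((T.filter (fun p => ¬ cond p)).card : ℝ)) ≤
        ∑ t ∈ S, ((cell t).card : ℝ) := by
      have h1 := Finset.card_le_card hBsub
      rw [Finset.card_biUnion (fun t1 _ t2 _ h => hdisj t1 t2 h)] at h1
      exact_mod_cast h1
    have hdB : d * ((T.filter (fun p => ¬ cond p)).card : ℝ) ≤ γ * N := by
      calc d * ((T.filter (fun p => ¬ cond p)).card : ℝ)
          ≤ d * ∑ t ∈ S, ((cell t).card : ℝ) := mul_le_mul_of_nonneg_left hBcard hd0.le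
        _ = ∑ t ∈ S, d * ((cell t).card : ℝ) := Finset.mul_sum _ _ _
        _ ≤ ∑ t ∈ S, w t := Finset.sum_le_sum fun t ht => (Finset.mem_filter.mp ht).2
        _ ≤ ∑ t, w t := Finset.sum_le_sum_of_subset_of_nonneg (Finset.subset_univ S)
            (fun t _ _ => hw0 t)
        _ ≤ γ * N := hwsum
    have hB_le : ((T.filter (fun p => ¬ cond p)).card : ℝ) ≤ d * N := by
      rw [← hdd, mul_assoc] at hdB
      exact le_of_mul_le_mul_left hdB hd0
    have hsplit : ((T.filter cond).card : ℝ) +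
        ((T.filter (fun p => ¬ cond p)).card : ℝ) = N := by
      rw [hN]
      exact_mod_cast Finset.card_filter_add_card_filter_not (p := cond)
    nlinarith [hsplit, hB_le]
  constructor
  · intro hlt
    rw [hrelG] at hlt
    have hFN : F ≤ γ * N := by
      rcases eq_or_lt_of_le hN0 with h0 | hNpos
      · nlinarith
      · nlinarith [(div_lt_iff₀ hNpos).mp hlt]
    refine core _ _
      (fun t => (((cell t).filter (fun p => (p.1, p.2.1, p.2.2) ∈ He)).card : ℝ))
      (fun t => Nat.cast_nonneg _) (by rw [hsum_h]; exact hFN) ?_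
    intro p hp hc
    push_neg at hc
    obtain ⟨i, j, k, μ, ν, ξ, hi, hj, hk, hμ, hν, hξ, hge⟩ := hc
    exact ⟨(i, j, k, μ, ν, ξ), (mem_cell p _).mpr ⟨hi, hj, hk, hμ, hν, hξ⟩,
      relDensity_markov_lower hge⟩
  · intro hgt
    rw [hrelG] at hgt
    have hFN : ∑ t, (((cell t).card : ℝ) -
        (((cell t).filter (fun p => (p.1, p.2.1, p.2.2) ∈ He)).card : ℝ)) ≤ γ * N := by
      rw [Finset.sum_sub_distrib, hsum_a, hsum_h]
      rcases eq_or_lt_of_le hN0 with h0 | hNpos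
      · nlinarith
      · nlinarith [(lt_div_iff₀ hNpos).mp hgt]
    refine core _ _
      (fun t => ((cell t).card : ℝ) -
        (((cell t).filter (fun p => (p.1, p.2.1, p.2.2) ∈ He)).card : ℝ))
      (fun t => by
        have h1 : (((cell t).filter (fun p => (p.1, p.2.1, p.2.2) ∈ He)).card : ℝ) ≤
            ((cell t).card : ℝ) := by
          exact_mod_cast Finset.card_le_card (Finset.filter_subset _ _)
        exact sub_nonneg.mpr h1)
      hFN ?_
    intro p hp hc
    push_neg at hc
    obtain ⟨i, j, k, μ, ν, ξ, hi, hj, hk, hμ, hν, hξ, hge⟩ := hc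
    exact ⟨(i, j, k, μ, ν, ξ), (mem_cell p _).mpr ⟨hi, hj, hk, hμ, hν, hξ⟩,
      relDensity_markov_upper hge⟩
end

section
/- For every integer d ≥ 1 there is a constant c depending only on d such that the following holds for every ε ∈ (0,1). Every finite graph G with VC dimension at most d admits a partition V(G) = V₁ ⊔ ⋯ ⊔ V_K with K ≤ 2^{2^{(1/ε)^c}} such that at least a (1−ε)-fraction of the pairs (x,y) ∈ V(G)² lie in an ε-homogeneous pair (V_i, V_j). -/
open scoped Classical

variable {V : Type}

/-- VC dimension of a graph is at most `d`. -/
def VCdimLE {V : Type} [Fintype V] [DecidableEq V] (G : SimpleGraph V) (d : ℕ) : Prop :=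
  ∀ S : Finset V, (∀ T ⊆ S, ∃ v : V, S.filter (fun u => G.Adj v u) = T) → S.card ≤ d

noncomputable def gDensity {V : Type} [DecidableEq V] (G : SimpleGraph V)
    (A B : Finset V) : ℝ :=
  (((A ×ˢ B).filter fun p => G.Adj p.1 p.2).card : ℝ) / ((A.card : ℝ) * (B.card : ℝ))

/-!
Call `u, v` close when their neighbourhoods differ in fewer than `ε²n` vertices, and take a
maximal set `C` of pairwise non-close vertices; every vertex then has a close centre in `C`.
Cutting the Voronoi cells of the centres by the neighbourhoods of the vertices of `C` gives at
most `2 ^ (2 |C|)` parts, and for two parts `A, B` all of `A` has one centre `w`, adjacent to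
all of `B` or to none of it. So if `(A, B)` is not `ε`-homogeneous, at least `ε |A| |B|` pairs
`(a, b) ∈ A × B` have `a` and its centre disagreeing about `b`; there are fewer than `ε²n²` such
pairs in total, so the non-homogeneous pairs of parts cover at most `εn²` pairs of vertices.

Bounded VC dimension makes `C` small. If `|C|² (1 - ε²)^k < 1`, some `k` vertices separate the
neighbourhoods of every two vertices of `C`, so the traces of `C` on these `k` vertices are
distinct and the Sauer–Shelah lemma gives `|C| ≤ (d + 1) (k + 1)^d`. Hence `|C|` is polynomial
in `1/ε`, far below the required `2 ^ (ε⁻¹)^c`.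
-/

open Finset Filter

lemma eventually_mul_pow_lt_two_pow (a b : ℕ) : ∀ᶠ T : ℕ in atTop, a * T ^ b < 2 ^ T := by
  have h := (tendsto_pow_const_div_const_pow_of_one_lt b one_lt_two).eventually
    (gt_mem_nhds (show (0 : ℝ) < 1 / (a + 1) by positivity))
  filter_upwards [h] with T hT
  rw [div_lt_div_iff₀ (by positivity) (by positivity), one_mul] at hT
  have : (a : ℝ) * T ^ b < 2 ^ T := by nlinarith [pow_nonneg (Nat.cast_nonneg (α := ℝ) T) b]
  exact_mod_cast this

/- With `x = ε⁻¹`, `T` is the exponent of the bound `#C < 2 ^ T` on a separated net `C`: the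
first condition gives `ε ^ 2 * (T + 1) ≥ 1`, the second is the hypothesis of
`SimpleGraph.card_lt_two_pow_of_separated` with `j = T + 1`, and the third turns the bound
`2 ^ (2 * #C)` on the number of parts into `2 ^ 2 ^ x ^ c`. -/
lemma exists_exponent_net_bound (d : ℕ) : ∃ c : ℕ, ∀ x : ℝ, 2 ≤ x → ∃ T : ℕ,
    x ^ 2 ≤ T + 1 ∧ (d + 1) * ((2 * T + 1) * (T + 1) + 1) ^ d < 2 ^ T ∧ (T : ℝ) + 1 ≤ x ^ c := by
  obtain ⟨T₀, hT₀⟩ := eventually_atTop.1 (eventually_mul_pow_lt_two_pow ((d + 1) * 7 ^ d) (2 * d))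
  refine ⟨T₀ + 3, fun x hx => ⟨⌊x ^ (T₀ + 2)⌋₊, ?_, ?_, ?_⟩⟩
  · calc x ^ 2 ≤ x ^ (T₀ + 2) := pow_le_pow_right₀ (by linarith) (by omega)
      _ ≤ _ := (Nat.lt_floor_add_one _).le
  · set T := ⌊x ^ (T₀ + 2)⌋₊
    have hT : 2 ^ (T₀ + 2) ≤ T := by
      apply Nat.le_floor
      exact_mod_cast pow_le_pow_left₀ (by norm_num) hx _
    have hT1 : T₀ ≤ T := ((Nat.lt_two_pow_self).le.trans
      (Nat.pow_le_pow_right two_pos (by omega))).trans hT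
    calc (d + 1) * ((2 * T + 1) * (T + 1) + 1) ^ d ≤ (d + 1) * (7 * T ^ 2) ^ d := by
          gcongr; nlinarith [(Nat.one_le_two_pow).trans hT]
      _ = (d + 1) * 7 ^ d * T ^ (2 * d) := by ring
      _ < 2 ^ T := hT₀ T hT1
  · have h1 : (1 : ℝ) ≤ x ^ (T₀ + 2) := one_le_pow₀ (by linarith)
    calc (⌊x ^ (T₀ + 2)⌋₊ : ℝ) + 1 ≤ x ^ (T₀ + 2) + x ^ (T₀ + 2) := by
          gcongr; exact Nat.floor_le (by linarith)
      _ ≤ x ^ (T₀ + 3) := by rw [pow_succ x (T₀ + 2)]; nlinarith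

lemma one_sub_pow_le_half {δ : ℝ} (hδ : δ ≤ 1) {j : ℕ} (hj : 1 ≤ δ * j) : (1 - δ) ^ j ≤ 1 / 2 := by
  calc (1 - δ) ^ j ≤ Real.exp (-δ) ^ j :=
        pow_le_pow_left₀ (by linarith) (Real.one_sub_le_exp_neg δ) j
    _ = Real.exp (-(δ * j)) := by rw [← Real.exp_nat_mul]; ring_nf
    _ ≤ Real.exp (-1) := Real.exp_le_exp.2 (by linarith)
    _ ≤ 1 / 2 := by
        rw [Real.exp_neg, one_div]
        exact inv_anti₀ two_pos (by linarith [Real.exp_one_gt_d9])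

lemma two_pow_two_pow_le {m : ℕ} {y : ℝ} (h : (m : ℝ) ≤ y) :
    (2 : ℝ) ^ 2 ^ m ≤ (2 : ℝ) ^ (2 : ℝ) ^ y := by
  calc (2 : ℝ) ^ 2 ^ m = (2 : ℝ) ^ (2 : ℝ) ^ (m : ℝ) := by
        rw [Real.rpow_natCast, ← Real.rpow_natCast]; norm_cast
    _ ≤ (2 : ℝ) ^ (2 : ℝ) ^ y := by gcongr <;> norm_num

lemma Finset.card_le_of_forall_shatters_card_le {α : Type*} [DecidableEq α]
    {𝒜 : Finset (Finset α)} {S : Finset α} {d : ℕ} (hS : ∀ t ∈ 𝒜, t ⊆ S)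
    (hd : ∀ t, 𝒜.Shatters t → #t ≤ d) : #𝒜 ≤ (d + 1) * (#S + 1) ^ d := by
  have hsub : 𝒜.shatterer ⊆ (range (d + 1)).biUnion fun i => S.powersetCard i := by
    intro t ht
    obtain ⟨u, hu, htu⟩ := (mem_shatterer.1 ht).exists_superset
    simp only [mem_biUnion, mem_range, mem_powersetCard]
    exact ⟨#t, Nat.lt_succ_of_le (hd t (mem_shatterer.1 ht)), htu.trans (hS u hu), rfl⟩
  calc #𝒜 ≤ #𝒜.shatterer := card_le_card_shatterer 𝒜
    _ ≤ ∑ i ∈ range (d + 1), #(S.powersetCard i) := (card_le_card hsub).trans card_biUnion_le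
    _ ≤ ∑ _i ∈ range (d + 1), (#S + 1) ^ d := by
        refine sum_le_sum fun i hi => ?_
        rw [card_powersetCard]
        calc (#S).choose i ≤ #S ^ i := Nat.choose_le_pow _ _
          _ ≤ (#S + 1) ^ i := Nat.pow_le_pow_left (Nat.le_succ _) _
          _ ≤ (#S + 1) ^ d :=
              Nat.pow_le_pow_right (Nat.succ_pos _) (Nat.lt_succ_iff.1 (mem_range.1 hi))
    _ = (d + 1) * (#S + 1) ^ d := by simp

lemma exists_separated_covering {α : Type*} [Fintype α] (f : α → α → ℝ)
    (hf : ∀ u v, f u v = f v u) {r : ℝ} (hr : ∀ v, f v v < r) :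
    ∃ C : Finset α, (C : Set α).Pairwise (fun u v => r ≤ f u v) ∧ ∀ v, ∃ u ∈ C, f v u < r := by
  set separated := (univ : Finset α).powerset.filter
    fun C : Finset α => (C : Set α).Pairwise fun u v => r ≤ f u v
  obtain ⟨C, hCmem, hCmax⟩ := exists_max_image separated card
    ⟨∅, mem_filter.2 ⟨empty_mem_powerset _, by simp⟩⟩
  have hC := (mem_filter.1 hCmem).2
  refine ⟨C, hC, fun v => ?_⟩
  by_contra! hfar
  have hv : v ∉ C := fun hv => (hr v).not_ge (hfar v hv)
  have hins : insert v C ∈ separated := by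
    refine mem_filter.2 ⟨mem_powerset.2 (subset_univ _), ?_⟩
    rw [coe_insert, Set.pairwise_insert]
    exact ⟨hC, fun u hu _ => ⟨hfar u hu, hf v u ▸ hfar u hu⟩⟩
  have := hCmax _ hins
  rw [card_insert_of_notMem hv] at this
  omega

namespace SimpleGraph

variable [Fintype V] (G : SimpleGraph V)

noncomputable def nbhdDist (u v : V) : ℕ := #{x | ¬(G.Adj u x ↔ G.Adj v x)}

lemma nbhdDist_comm (u v : V) : G.nbhdDist u v = G.nbhdDist v u := by
  simp only [nbhdDist, iff_comm]

@[simp] lemma nbhdDist_self (v : V) : G.nbhdDist v v = 0 := by simp [nbhdDist]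

lemma card_disagree_eq_sum_nbhdDist (f : V → V) :
    #{p : V × V | ¬(G.Adj p.1 p.2 ↔ G.Adj (f p.1) p.2)} = ∑ a, G.nbhdDist a (f a) := by
  simp only [nbhdDist, card_filter, Fintype.sum_prod_type]

variable {G}

lemma _root_.VCdimLE.card_le_of_shatters {d : ℕ} (hVC : VCdimLE G d) {C S B : Finset V}
    (hB : (C.image fun u => {x ∈ S | G.Adj u x}).Shatters B) : #B ≤ d := by
  obtain ⟨_, hu, hBu⟩ := hB.exists_superset
  obtain ⟨u, -, rfl⟩ := mem_image.1 hu
  have hBS : B ⊆ S := hBu.trans (filter_subset _ _)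
  refine hVC B fun T hT => ?_
  obtain ⟨_, hv, hBv⟩ := hB hT
  obtain ⟨v, -, rfl⟩ := mem_image.1 hv
  refine ⟨v, ?_⟩
  rw [← hBv, inter_filter, inter_eq_left.2 hBS]

lemma exists_seq_separating [Nonempty V] {δ : ℝ} (hδ : δ ≤ 1) {C : Finset V}
    (hC : (C : Set V).Pairwise fun u v => δ * Fintype.card V ≤ G.nbhdDist u v) {k : ℕ}
    (hk : (#C : ℝ) ^ 2 * (1 - δ) ^ k < 1) :
    ∃ s : Fin k → V,
      (C : Set V).Pairwise fun u v => ∃ i, ¬(G.Adj u (s i) ↔ G.Adj v (s i)) := by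
  set n := Fintype.card V
  set pairs := (C ×ˢ C).filter fun q => q.1 ≠ q.2
  set agree : V × V → Finset V := fun q => {x | G.Adj q.1 x ↔ G.Adj q.2 x}
  -- the sequences that fail to separate some pair: the union bound of the probabilistic method
  set bad := pairs.biUnion fun q => Fintype.piFinset fun _ : Fin k => agree q
  have hagree : ∀ q ∈ pairs, (#(agree q) : ℝ) ≤ (1 - δ) * n := by
    intro q hq
    obtain ⟨hq, hne⟩ := mem_filter.1 hq
    obtain ⟨hq1, hq2⟩ := mem_product.1 hq
    have hsplit : #(agree q) + G.nbhdDist q.1 q.2 = n :=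
      (card_filter_add_card_filter_not _).trans card_univ
    have hsplit' : (#(agree q) : ℝ) + G.nbhdDist q.1 q.2 = n := by exact_mod_cast hsplit
    linarith [hC hq1 hq2 hne]
  have hbad : (#bad : ℝ) < n ^ k := by
    have hn : (0 : ℝ) < n := Nat.cast_pos.2 Fintype.card_pos
    calc (#bad : ℝ) ≤ ∑ q ∈ pairs, (#(agree q) : ℝ) ^ k := by
          exact_mod_cast card_biUnion_le.trans_eq (by simp)
      _ ≤ ∑ _q ∈ pairs, ((1 - δ) * n) ^ k :=
          sum_le_sum fun q hq => pow_le_pow_left₀ (Nat.cast_nonneg _) (hagree q hq) k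
      _ ≤ (#C : ℝ) ^ 2 * (1 - δ) ^ k * n ^ k := by
          rw [sum_const, nsmul_eq_mul, mul_pow, ← mul_assoc]
          have hpairs : (#pairs : ℝ) ≤ #C ^ 2 := by
            exact_mod_cast (card_filter_le _ _).trans_eq (by rw [card_product, sq])
          have : (0 : ℝ) ≤ (1 - δ) ^ k := pow_nonneg (by linarith) _
          gcongr
      _ < n ^ k := mul_lt_of_lt_one_left (pow_pos hn k) hk
  obtain ⟨s, -, hs⟩ : ∃ s ∈ (univ : Finset (Fin k → V)), s ∉ bad := by
    by_contra! h
    have := card_le_card h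
    rw [card_univ, Fintype.card_fun, Fintype.card_fin] at this
    exact hbad.not_ge (by exact_mod_cast this)
  refine ⟨s, fun u hu v hv huv => ?_⟩
  have : s ∉ Fintype.piFinset fun _ => agree (u, v) := fun h =>
    hs (mem_biUnion.2 ⟨(u, v), mem_filter.2 ⟨mem_product.2 ⟨hu, hv⟩, huv⟩, h⟩)
  simpa [agree] using this

lemma card_le_of_separated {d : ℕ} (hVC : VCdimLE G d) {δ : ℝ} (hδ : δ ≤ 1) {C : Finset V}
    (hC : (C : Set V).Pairwise fun u v => δ * Fintype.card V ≤ G.nbhdDist u v) {k : ℕ}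
    (hk : (#C : ℝ) ^ 2 * (1 - δ) ^ k < 1) : #C ≤ (d + 1) * (k + 1) ^ d := by
  obtain rfl | ⟨v₀, -⟩ := C.eq_empty_or_nonempty
  · simp
  have : Nonempty V := ⟨v₀⟩
  obtain ⟨s, hs⟩ := exists_seq_separating hδ hC hk
  set S := univ.image s
  set trace : V → Finset V := fun u => {x ∈ S | G.Adj u x}
  have htrace : Set.InjOn trace C := by
    intro u hu v hv huv
    by_contra hne
    obtain ⟨i, hi⟩ := hs hu hv hne
    have hmem : ∀ w, s i ∈ trace w ↔ G.Adj w (s i) := fun w => by simp [trace, S]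
    exact hi ((hmem u).symm.trans (huv ▸ hmem v))
  calc #C = #(C.image trace) := (card_image_of_injOn htrace).symm
    _ ≤ (d + 1) * (#S + 1) ^ d :=
        card_le_of_forall_shatters_card_le (by simp [trace]) fun B hB => hVC.card_le_of_shatters hB
    _ ≤ (d + 1) * (k + 1) ^ d := by
        gcongr
        exact card_image_le.trans_eq (by simp)

lemma card_lt_two_pow_of_separated {d : ℕ} (hVC : VCdimLE G d) {δ : ℝ} (hδ : δ ≤ 1)
    {C : Finset V} (hC : (C : Set V).Pairwise fun u v => δ * Fintype.card V ≤ G.nbhdDist u v)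
    {T j : ℕ} (hj : 1 ≤ δ * j) (hT : (d + 1) * ((2 * T + 1) * j + 1) ^ d < 2 ^ T) :
    #C < 2 ^ T := by
  by_contra! hbig
  obtain ⟨C', hC'C, hC'⟩ := exists_subset_card_eq hbig
  have hsmall : (#C' : ℝ) ^ 2 * (1 - δ) ^ ((2 * T + 1) * j) < 1 := by
    have hhalf := one_sub_pow_le_half hδ hj
    calc (#C' : ℝ) ^ 2 * (1 - δ) ^ ((2 * T + 1) * j)
        = ((2 : ℝ) ^ T) ^ 2 * ((1 - δ) ^ j) ^ (2 * T + 1) := by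
          rw [hC', ← pow_mul (1 - δ) j, mul_comm j]; push_cast; ring
      _ ≤ ((2 : ℝ) ^ T) ^ 2 * (1 / 2) ^ (2 * T + 1) := by gcongr
      _ = 1 / 2 := by
          rw [pow_succ (1 / 2 : ℝ), pow_mul, ← pow_mul, ← mul_assoc, mul_comm T 2, pow_mul,
            ← mul_pow]
          norm_num
      _ < 1 := by norm_num
  have := card_le_of_separated hVC hδ (hC.mono (coe_subset.2 hC'C)) hsmall
  omega

end SimpleGraph

namespace Finpartition

variable [DecidableEq V]

lemma isVertexPartition {s : Finset V} (Q : Finpartition s) : IsVertexPartition Q.parts s :=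
  ⟨fun _ => Q.le, fun _ => Q.existsUnique_mem⟩

lemma mem_iff_mem_of_mem_atomise {s : Finset V} {F : Finset (Finset V)} {A : Finset V}
    (hA : A ∈ (atomise s F).parts) {a b : V} (ha : a ∈ A) (hb : b ∈ A) {t : Finset V}
    (ht : t ∈ F) : a ∈ t ↔ b ∈ t := by
  obtain ⟨-, Q, -, rfl⟩ := mem_atomise.1 hA
  exact ((mem_filter.1 ha).2 t ht).symm.trans ((mem_filter.1 hb).2 t ht)

variable [Fintype V] (Q : Finpartition (univ : Finset V))

lemma forall_mem_parts_iff (R : Finset V → Finset V → Prop) (x y : V) :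
    (∀ A ∈ Q.parts, ∀ B ∈ Q.parts, x ∈ A → y ∈ B → R A B) ↔ R (Q.part x) (Q.part y) := by
  refine ⟨fun h => h _ (Q.part_mem.2 (mem_univ x)) _ (Q.part_mem.2 (mem_univ y))
    (Q.mem_part_self.2 (mem_univ x)) (Q.mem_part_self.2 (mem_univ y)), ?_⟩
  intro h A hA B hB hx hy
  rwa [← Q.part_eq_of_mem hA hx, ← Q.part_eq_of_mem hB hy]

lemma mul_card_not_rel_le (R : Finset V → Finset V → Prop) [DecidableRel R] (D : V × V → Prop)
    [DecidablePred D] {ε : ℝ}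
    (h : ∀ A ∈ Q.parts, ∀ B ∈ Q.parts, ¬R A B → ε * (#A * #B) ≤ #{p ∈ A ×ˢ B | D p}) :
    ε * #{p : V × V | ¬R (Q.part p.1) (Q.part p.2)} ≤ #{p : V × V | D p} := by
  set f : V × V → Finset V × Finset V := fun p => (Q.part p.1, Q.part p.2)
  set K := (Q.parts ×ˢ Q.parts).filter fun q => ¬R q.1 q.2
  have hfiber : ∀ q ∈ Q.parts ×ˢ Q.parts, ∀ p : V × V, f p = q ↔ p ∈ q.1 ×ˢ q.2 := by
    intro q hq p
    obtain ⟨h1, h2⟩ := mem_product.1 hq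
    simp only [f, Prod.ext_iff, mem_product, Q.part_eq_iff_mem h1, Q.part_eq_iff_mem h2]
  have hbad : #{p : V × V | ¬R (Q.part p.1) (Q.part p.2)} = ∑ q ∈ K, #(q.1 ×ˢ q.2) := by
    rw [card_eq_sum_card_fiberwise (f := f) (t := K)]
    · refine sum_congr rfl fun q hq => congrArg card ?_
      ext p
      simp only [mem_filter, mem_univ, true_and, ← hfiber q (mem_filter.1 hq).1 p]
      refine ⟨And.right, fun hp => ⟨?_, hp⟩⟩
      change ¬R (f p).1 (f p).2
      exact hp ▸ (mem_filter.1 hq).2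
    · intro p hp
      exact mem_filter.2 ⟨mem_product.2 ⟨Q.part_mem.2 (mem_univ _), Q.part_mem.2 (mem_univ _)⟩,
        (mem_filter.1 hp).2⟩
  have hD : ∑ q ∈ K, #{p ∈ q.1 ×ˢ q.2 | D p} ≤ #{p : V × V | D p} := by
    calc ∑ q ∈ K, #{p ∈ q.1 ×ˢ q.2 | D p} = ∑ q ∈ K, #{p ∈ {p : V × V | D p} | f p = q} := by
          refine sum_congr rfl fun q hq => congrArg card ?_
          ext p
          simp [hfiber q (mem_filter.1 hq).1 p, and_comm]
      _ ≤ #{p : V × V | D p} := by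
          rw [sum_card_fiberwise_eq_card_filter]
          exact card_filter_le _ _
  rw [hbad, Nat.cast_sum, mul_sum]
  calc ∑ q ∈ K, ε * (#(q.1 ×ˢ q.2) : ℝ) ≤ ∑ q ∈ K, (#{p ∈ q.1 ×ˢ q.2 | D p} : ℝ) := by
        refine sum_le_sum fun q hq => ?_
        obtain ⟨hq, hR⟩ := mem_filter.1 hq
        rw [card_product, Nat.cast_mul]
        exact h q.1 (mem_product.1 hq).1 q.2 (mem_product.1 hq).2 hR
    _ ≤ #{p : V × V | D p} := by exact_mod_cast hD

end Finpartition

namespace SimpleGraph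

variable [DecidableEq V] (G : SimpleGraph V)

-- An `abbrev`, so that filters by this predicate get the same decidability instances as the
-- filter in `graph_double_exp`.
abbrev IsHomogeneous (ε : ℝ) (A B : Finset V) : Prop :=
  gDensity G A B ≤ ε ∨ 1 - ε ≤ gDensity G A B

noncomputable def homogeneousPairs [Fintype V] (ε : ℝ) (P : Finset (Finset V)) : Finset (V × V) :=
  {p | ∀ A ∈ P, ∀ B ∈ P, p.1 ∈ A → p.2 ∈ B → G.IsHomogeneous ε A B}

variable {G}

lemma isHomogeneous_of_half_le {ε : ℝ} (hε : 1 / 2 ≤ ε) (A B : Finset V) :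
    G.IsHomogeneous ε A B :=
  (le_or_gt (gDensity G A B) ε).imp_right fun h => by linarith

lemma mul_card_le_card_disagree {ε : ℝ} {A B : Finset V} (hAB : ¬G.IsHomogeneous ε A B) {w : V}
    (hw : (∀ b ∈ B, G.Adj w b) ∨ ∀ b ∈ B, ¬G.Adj w b) :
    ε * (#A * #B) ≤ #{p ∈ A ×ˢ B | ¬(G.Adj p.1 p.2 ↔ G.Adj w p.2)} := by
  simp only [IsHomogeneous, gDensity, not_or, not_le] at hAB
  set E := #{p ∈ A ×ˢ B | G.Adj p.1 p.2}
  rcases (Nat.cast_nonneg (α := ℝ) (#A * #B)).eq_or_lt with h0 | hpos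
  · push_cast at h0; rw [← h0]; simp
  push_cast at hpos
  rw [lt_div_iff₀ hpos, div_lt_iff₀ hpos] at hAB
  rcases hw with hw | hw
  · have hsplit := card_filter_add_card_filter_not (s := A ×ˢ B) fun p => G.Adj p.1 p.2
    rw [card_product] at hsplit
    have : #{p ∈ A ×ˢ B | ¬(G.Adj p.1 p.2 ↔ G.Adj w p.2)} = #{p ∈ A ×ˢ B | ¬G.Adj p.1 p.2} :=
      congrArg card (filter_congr fun p hp => by simp [hw p.2 (mem_product.1 hp).2])
    have hsplit' : (E : ℝ) + #{p ∈ A ×ˢ B | ¬G.Adj p.1 p.2} = #A * #B := by exact_mod_cast hsplit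
    rw [this]; linarith
  · have : #{p ∈ A ×ˢ B | ¬(G.Adj p.1 p.2 ↔ G.Adj w p.2)} = E :=
      congrArg card (filter_congr fun p hp => by simp [hw p.2 (mem_product.1 hp).2])
    rw [this]; linarith

variable [Fintype V]

lemma card_homogeneousPairs_of_half_le {ε : ℝ} (hε : 1 / 2 ≤ ε) (P : Finset (Finset V)) :
    #(G.homogeneousPairs ε P) = Fintype.card V ^ 2 := by
  rw [homogeneousPairs, filter_true_of_mem fun p _ A _ B _ _ _ => isHomogeneous_of_half_le hε A B,
    card_univ, Fintype.card_prod, sq]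

lemma exists_finpartition_of_covering {ε : ℝ} (hε : 0 < ε) {C : Finset V}
    (hC : ∀ v, ∃ u ∈ C, (G.nbhdDist v u : ℝ) < ε ^ 2 * Fintype.card V) :
    ∃ Q : Finpartition (univ : Finset V), #Q.parts ≤ 2 ^ (2 * #C) ∧
      (1 - ε) * Fintype.card V ^ 2 ≤ #(G.homogeneousPairs ε Q.parts) := by
  choose center hcenter hclose using hC
  -- a part of `atomise univ F` lies in one Voronoi cell and on one side of each `N(w)`, `w ∈ C`
  set F : Finset (Finset V) :=
    C.image (fun w => univ.filter (G.Adj w)) ∪ C.image fun w => univ.filter (center · = w)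
  set Q := Finpartition.atomise univ F
  refine ⟨Q, Finpartition.card_atomise_le.trans (Nat.pow_le_pow_right two_pos ?_), ?_⟩
  · exact card_union_le _ _ |>.trans (add_le_add card_image_le card_image_le) |>.trans_eq
      (two_mul _).symm
  set n := Fintype.card V
  have hpair : ∀ A ∈ Q.parts, ∀ B ∈ Q.parts, ¬G.IsHomogeneous ε A B →
      ε * (#A * #B) ≤ #{p ∈ A ×ˢ B | ¬(G.Adj p.1 p.2 ↔ G.Adj (center p.1) p.2)} := by
    intro A hA B hB hAB
    obtain ⟨a₀, ha₀⟩ := Finpartition.nonempty_of_mem_parts _ hA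
    obtain ⟨b₀, hb₀⟩ := Finpartition.nonempty_of_mem_parts _ hB
    have hcell : ∀ a ∈ A, center a = center a₀ := fun a ha => by
      simpa using (Finpartition.mem_iff_mem_of_mem_atomise hA ha ha₀
        (mem_union_right _ (mem_image_of_mem _ (hcenter a₀)))).2
    have hadj : ∀ b ∈ B, G.Adj (center a₀) b ↔ G.Adj (center a₀) b₀ := fun b hb => by
      simpa using Finpartition.mem_iff_mem_of_mem_atomise hB hb hb₀
        (mem_union_left _ (mem_image_of_mem (fun w => univ.filter (G.Adj w)) (hcenter a₀)))
    have hw : (∀ b ∈ B, G.Adj (center a₀) b) ∨ ∀ b ∈ B, ¬G.Adj (center a₀) b := by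
      by_cases h : G.Adj (center a₀) b₀
      · exact .inl fun b hb => (hadj b hb).2 h
      · exact .inr fun b hb => mt (hadj b hb).1 h
    refine (mul_card_le_card_disagree hAB hw).trans_eq (congrArg _ (congrArg card ?_))
    exact filter_congr fun p hp => by rw [hcell p.1 (mem_product.1 hp).1]
  have hbad := Q.mul_card_not_rel_le (G.IsHomogeneous ε)
    (fun p => ¬(G.Adj p.1 p.2 ↔ G.Adj (center p.1) p.2)) hpair
  have hdisagree : (#{p : V × V | ¬(G.Adj p.1 p.2 ↔ G.Adj (center p.1) p.2)} : ℝ)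
      ≤ ε ^ 2 * n ^ 2 := by
    rw [card_disagree_eq_sum_nbhdDist, Nat.cast_sum]
    calc ∑ a, (G.nbhdDist a (center a) : ℝ) ≤ ∑ _a : V, ε ^ 2 * n :=
          sum_le_sum fun a _ => (hclose a).le
      _ = ε ^ 2 * n ^ 2 := by rw [sum_const, card_univ, nsmul_eq_mul]; ring
  have hsplit : #(G.homogeneousPairs ε Q.parts)
      + #{p : V × V | ¬G.IsHomogeneous ε (Q.part p.1) (Q.part p.2)} = n ^ 2 := by
    rw [homogeneousPairs, filter_congr fun p _ => Q.forall_mem_parts_iff _ p.1 p.2,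
      card_filter_add_card_filter_not, card_univ, Fintype.card_prod, sq]
  have hsplit' : (#(G.homogeneousPairs ε Q.parts) : ℝ)
      + #{p : V × V | ¬G.IsHomogeneous ε (Q.part p.1) (Q.part p.2)} = n ^ 2 := by
    exact_mod_cast hsplit
  have hbad' : (#{p : V × V | ¬G.IsHomogeneous ε (Q.part p.1) (Q.part p.2)} : ℝ) ≤ ε * n ^ 2 :=
    (mul_le_mul_iff_right₀ hε).1 (by linarith)
  linarith

end SimpleGraph

theorem graph_double_exp_general (d : ℕ) :
    ∃ c : ℕ, ∀ ε : ℝ, 0 < ε → ε < 1 →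
      ∀ (V : Type) [Fintype V] [DecidableEq V] (G : SimpleGraph V),
        VCdimLE G d →
        ∃ P : Finset (Finset V), IsVertexPartition P Finset.univ ∧
          ((P.card : ℝ) ≤ (2 : ℝ) ^ ((2 : ℝ) ^ (ε⁻¹ ^ c))) ∧
          (1 - ε) * ((Fintype.card V : ℝ)) ^ 2 ≤
            (((Finset.univ : Finset (V × V)).filter fun p =>
              ∀ A ∈ P, ∀ B ∈ P, p.1 ∈ A → p.2 ∈ B →
                (gDensity G A B ≤ ε ∨ 1 - ε ≤ gDensity G A B)).card : ℝ) := by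
  obtain ⟨c, hc⟩ := exists_exponent_net_bound d
  refine ⟨c, fun ε hε0 hε1 V _ _ G hVC => ?_⟩
  rcases le_or_gt (1 / 2) ε with hε | hε
  · refine ⟨(⊤ : Finpartition (univ : Finset V)).parts, Finpartition.isVertexPartition _, ?_, ?_⟩
    · calc (#(⊤ : Finpartition (univ : Finset V)).parts : ℝ) ≤ 1 := by
            exact_mod_cast (card_le_card (Finpartition.parts_top_subset _)).trans_eq
              (card_singleton _)
        _ ≤ _ := Real.one_le_rpow one_le_two (by positivity)
    · have h := G.card_homogeneousPairs_of_half_le hε (⊤ : Finpartition (univ : Finset V)).parts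
      change _ ≤ (#(G.homogeneousPairs ε _) : ℝ)
      rw [h]
      push_cast
      nlinarith
  obtain ⟨T, hxT, hT, hTc⟩ := hc ε⁻¹ (by rw [le_inv_comm₀ two_pos hε0]; linarith)
  obtain ⟨C, hCsep, hCcov⟩ := exists_separated_covering (fun u v => (G.nbhdDist u v : ℝ))
    (fun u v => by rw [G.nbhdDist_comm]) (r := ε ^ 2 * Fintype.card V)
    (fun v => by rw [G.nbhdDist_self, Nat.cast_zero]; have : Nonempty V := ⟨v⟩; positivity)
  have hC := G.card_lt_two_pow_of_separated hVC (by nlinarith) hCsep (j := T + 1)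
    (by rw [inv_pow, inv_le_iff_one_le_mul₀ (by positivity)] at hxT; push_cast; linarith) hT
  obtain ⟨Q, hQcard, hQgood⟩ := G.exists_finpartition_of_covering hε0 hCcov
  refine ⟨Q.parts, Q.isVertexPartition, ?_, hQgood⟩
  calc (#Q.parts : ℝ) ≤ (2 : ℝ) ^ 2 ^ (T + 1) := by
        exact_mod_cast hQcard.trans (Nat.pow_le_pow_right two_pos (by rw [pow_succ]; omega))
    _ ≤ _ := two_pow_two_pow_le (by exact_mod_cast hTc)

/-- Ultra-strong regularity with double-exponentially many parts for graphs of
bounded VC dimension. -/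
theorem graph_double_exp (d : ℕ) (hd : 1 ≤ d) :
    ∃ c : ℕ, ∀ ε : ℝ, 0 < ε → ε < 1 →
      ∀ (V : Type) [Fintype V] [DecidableEq V] (G : SimpleGraph V),
        VCdimLE G d →
        ∃ P : Finset (Finset V), IsVertexPartition P Finset.univ ∧
          ((P.card : ℝ) ≤ (2 : ℝ) ^ ((2 : ℝ) ^ (ε⁻¹ ^ c))) ∧
          (1 - ε) * ((Fintype.card V : ℝ)) ^ 2 ≤
            (((Finset.univ : Finset (V × V)).filter fun p =>
              ∀ A ∈ P, ∀ B ∈ P, p.1 ∈ A → p.2 ∈ B →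
                (gDensity G A B ≤ ε ∨ 1 - ε ≤ gDensity G A B)).card : ℝ) :=
  graph_double_exp_general d
end

section
/- For every integer d ≥ 1 there is a constant c depending only on d such that the following holds for every ε ∈ (0,1). Every finite graph G with VC dimension at most d admits a partition V(G) = V₁ ⊔ ⋯ ⊔ V_K with K ≤ (1/ε)^c such that at least a (1−ε)-fraction of the pairs (x,y) ∈ V(G)² lie in an ε-homogeneous pair (V_i, V_j). -/
open scoped Classical

variable {V : Type}

/-!
Compare vertices by the Hamming distance between their neighbourhoods. For a set `S` of
vertices that are pairwise more than `δn` apart, `t` random vertices fail to tell some pair of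
`S` apart with probability at most `|S|² (1 - δ)ᵗ`; when this is `< 1` the rows of `S` are
determined by their traces on a sample of size `t`, and Sauer–Shelah gives `|S| ≤ (t + 1)ᵈ`.
Hence a maximal `δn`-separated set `S` has size polynomial in `1/δ`. Grouping every vertex with
a nearby element of `S` gives parts in which any two rows (and, by symmetry, columns) differ in
at most `2δn` places, so the adjacency matrix is `4δn²`-close in `ℓ¹` to its block averages.
Every pair in a non-homogeneous block contributes more than `ε` to this distance, so
`δ = ε²/4` leaves at most `εn²` such pairs.
-/

open Finset
open scoped BigOperators

theorem card_filter_eq_eq_sub_hammingDist {β γ : Type*} [Fintype β] [DecidableEq γ]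
    (u v : β → γ) : #{b | u b = v b} = Fintype.card β - hammingDist u v := by
  have h := card_filter_add_card_filter_not (s := (univ : Finset β)) (fun b => u b = v b)
  rw [card_univ] at h
  simp only [hammingDist, ne_eq]
  omega

theorem exists_injOn_comp_of_lt_hammingDist {α β γ : Type*} [Fintype β] [Nonempty β]
    [DecidableEq γ] (u : α → β → γ) {S : Finset α} {δ : ℝ} {t : ℕ}
    (hS : (S : Set α).Pairwise fun a a' => δ * Fintype.card β < hammingDist (u a) (u a'))
    (hδ : δ ≤ 1) (ht : (#S : ℝ) ^ 2 * (1 - δ) ^ t < 1) :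
    ∃ T : Fin t → β, Set.InjOn (fun a => u a ∘ T) S := by
  by_contra! hbad
  set n : ℝ := (Fintype.card β : ℝ)
  set agree : α × α → Finset (Fin t → β) :=
    fun p => Fintype.piFinset fun _ => {b | u p.1 b = u p.2 b}
  have hcover : (univ : Finset (Fin t → β)) ⊆ S.offDiag.biUnion agree := by
    intro T _
    obtain ⟨a, ha, a', ha', hT, hne⟩ :
        ∃ a ∈ S, ∃ a' ∈ S, u a ∘ T = u a' ∘ T ∧ a ≠ a' := by
      simpa [Set.InjOn] using hbad T
    exact mem_biUnion.2 ⟨(a, a'), mem_offDiag.2 ⟨ha, ha', hne⟩,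
      Fintype.mem_piFinset.2 fun i => by simpa using congrFun hT i⟩
  have hagree : ∀ p ∈ S.offDiag, (#(agree p) : ℝ) ≤ ((1 - δ) * n) ^ t := by
    intro p hp
    obtain ⟨ha, ha', hne⟩ := mem_offDiag.1 hp
    rw [Fintype.card_piFinset_const, card_filter_eq_eq_sub_hammingDist, Nat.cast_pow]
    have hle : hammingDist (u p.1) (u p.2) ≤ Fintype.card β := hammingDist_le_card_fintype
    gcongr
    push_cast [hle]
    linarith [hS ha ha' hne]
  have hcount : n ^ t ≤ (#S : ℝ) ^ 2 * (1 - δ) ^ t * n ^ t := by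
    calc n ^ t = (#(univ : Finset (Fin t → β)) : ℝ) := by simp [n]
      _ ≤ ∑ p ∈ S.offDiag, (#(agree p) : ℝ) := by
        exact_mod_cast (card_le_card hcover).trans card_biUnion_le
      _ ≤ #S.offDiag * ((1 - δ) * n) ^ t := by simpa using sum_le_card_nsmul _ _ _ hagree
      _ ≤ (#S : ℝ) ^ 2 * ((1 - δ) * n) ^ t := by
        gcongr
        rw [offDiag_card, sq]
        exact_mod_cast Nat.sub_le _ _
      _ = (#S : ℝ) ^ 2 * (1 - δ) ^ t * n ^ t := by rw [mul_pow, mul_assoc]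
  nlinarith [pow_pos (by positivity : 0 < n) t]

theorem sum_choose_le_succ_pow (t d : ℕ) : ∑ k ∈ Iic d, t.choose k ≤ (t + 1) ^ d := by
  rw [add_pow, ← Nat.Iio_eq_range, show Iic d = Iio (d + 1) by ext; simp]
  refine sum_le_sum fun k hk => ?_
  rw [one_pow, mul_one]
  exact (Nat.choose_le_pow t k).trans
    (Nat.le_mul_of_pos_right _ (Nat.choose_pos (Nat.lt_succ_iff.1 (mem_Iio.1 hk))))

theorem exists_succ_pow_lt_one_add_pow (k : ℕ) {δ : ℝ} (hδ : 0 < δ) (hδ1 : δ ≤ 1) :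
    ∃ t : ℕ, ((t : ℝ) + 1) ^ k < (1 + δ) ^ t ∧
      (t : ℝ) + 1 ≤ 2 * (2 * (k + 1)) ^ (k + 1) * δ⁻¹ ^ (k + 1) := by
  set x : ℝ := (2 * (k + 1)) ^ k * δ⁻¹ ^ (k + 1)
  set s : ℕ := ⌊x⌋₊ + 1
  have hxs : x < s := by simpa [s] using Nat.lt_floor_add_one x
  have hsx : (s : ℝ) ≤ x + 1 := by simpa [s] using Nat.floor_le (by positivity : 0 ≤ x)
  have hs : (1 : ℝ) ≤ s := by simp [s]
  have ht : (((k + 1) * s : ℕ) : ℝ) + 1 ≤ 2 * (k + 1) * s := by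
    push_cast; nlinarith
  have hδinv : 1 ≤ δ⁻¹ ^ (k + 1) := one_le_pow₀ (one_le_inv₀ hδ |>.2 hδ1)
  refine ⟨(k + 1) * s, ?_, ?_⟩
  -- Bernoulli gives `(1 + δ) ^ s ≥ s * δ`, and `s` is chosen so that
  -- `s * δ ^ (k + 1) > (2 * (k + 1)) ^ k`.
  · calc (((k + 1) * s : ℕ) + 1 : ℝ) ^ k ≤ (2 * (k + 1) * s) ^ k := by gcongr
      _ = x * δ ^ (k + 1) * s ^ k := by
        rw [mul_pow]
        simp only [x, inv_pow]
        field_simp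
      _ < s * δ ^ (k + 1) * s ^ k := by gcongr
      _ = (s * δ) ^ (k + 1) := by ring
      _ ≤ ((1 + δ) ^ s) ^ (k + 1) := by
        gcongr
        linarith [one_add_mul_le_pow (by linarith : (-2 : ℝ) ≤ δ) s]
      _ = (1 + δ) ^ ((k + 1) * s) := by rw [← pow_mul, mul_comm]
  · calc (((k + 1) * s : ℕ) : ℝ) + 1 ≤ 2 * (k + 1) * (x + 1) := ht.trans (by gcongr)
      _ = (2 * (k + 1)) ^ (k + 1) * δ⁻¹ ^ (k + 1) + 2 * (k + 1) := by simp only [x]; ring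
      _ ≤ 2 * (2 * (k + 1)) ^ (k + 1) * δ⁻¹ ^ (k + 1) := by
        have : (2 * (k + 1) : ℝ) ≤ (2 * (k + 1)) ^ (k + 1) :=
          le_self_pow₀ (by linarith [k.cast_nonneg (α := ℝ)]) (by omega)
        nlinarith

theorem exists_maximal_pairwise {α : Type*} [Fintype α] [DecidableEq α] (r : α → α → Prop)
    (hr : ∀ a b, r a b → r b a) (hirr : ∀ a, ¬ r a a) :
    ∃ S : Finset α, (S : Set α).Pairwise r ∧ ∀ a, ∃ b ∈ S, ¬ r a b := by
  obtain ⟨S, hS, hmax⟩ :=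
    exists_max_image ({S | (S : Set α).Pairwise r} : Finset (Finset α)) card ⟨∅, by simp⟩
  replace hS : (S : Set α).Pairwise r := (mem_filter.1 hS).2
  refine ⟨S, hS, fun a => ?_⟩
  by_contra! hfar
  have haS : a ∉ S := fun ha => hirr a (hfar a ha)
  have hins : ((insert a S : Finset α) : Set α).Pairwise r := by
    rw [coe_insert]
    exact hS.insert fun b hb _ => ⟨hfar b hb, hr _ _ (hfar b hb)⟩
  have := hmax _ (mem_filter.2 ⟨mem_univ _, hins⟩)
  rw [card_insert_of_notMem haS] at this
  omega

theorem le_inv_pow_add_of_le_mul {ε x : ℝ} (hε : 0 < ε) (hε2 : ε ≤ 1 / 2) {C m : ℕ}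
    (h : x ≤ C * ε⁻¹ ^ m) : x ≤ ε⁻¹ ^ (C + m) := by
  have h2 : (2 : ℝ) ≤ ε⁻¹ := by rw [le_inv_comm₀ two_pos hε]; linarith
  calc x ≤ C * ε⁻¹ ^ m := h
    _ ≤ 2 ^ C * ε⁻¹ ^ m := by gcongr; exact_mod_cast Nat.lt_two_pow_self.le
    _ ≤ ε⁻¹ ^ C * ε⁻¹ ^ m := by gcongr
    _ = ε⁻¹ ^ (C + m) := (pow_add _ _ _).symm

section BlockAverage

variable {ι κ α β : Type*} [Fintype ι] [Fintype κ] [DecidableEq α] [DecidableEq β]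

def fiber (f : ι → α) (x : ι) : Finset ι := {x' | f x' = f x}

theorem mem_fiber {f : ι → α} {x x' : ι} : x' ∈ fiber f x ↔ f x' = f x := by simp [fiber]

theorem fiber_nonempty (f : ι → α) (x : ι) : (fiber f x).Nonempty := ⟨x, mem_fiber.2 rfl⟩

theorem fiber_eq_of_mem {f : ι → α} {x x' : ι} (h : x' ∈ fiber f x) :
    fiber f x' = fiber f x := by
  ext; simp [mem_fiber.1 h, mem_fiber]

theorem card_image_fiber_le [DecidableEq ι] (f : ι → α) :
    #(univ.image (fiber f)) ≤ #(univ.image f) := by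
  have : univ.image (fiber f) = (univ.image f).image fun a => ({x | f x = a} : Finset ι) := by
    rw [image_image]; rfl
  exact this ▸ card_image_le

theorem sum_expect_fiber (f : ι → α) (g : ι → ℝ) :
    ∑ x, 𝔼 x' ∈ fiber f x, g x' = ∑ x, g x := by
  calc ∑ x, 𝔼 x' ∈ fiber f x, g x' = ∑ x, ∑ x' ∈ fiber f x, g x' / #(fiber f x') := by
        refine sum_congr rfl fun x _ => ?_
        rw [expect_eq_sum_div_card, sum_div]
        exact sum_congr rfl fun x' hx' => by rw [fiber_eq_of_mem hx']
    _ = ∑ x', ∑ x ∈ fiber f x', g x' / #(fiber f x') :=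
        sum_comm' fun x x' => by simp [mem_fiber, eq_comm]
    _ = ∑ x, g x := by
        refine sum_congr rfl fun x _ => ?_
        rw [sum_const, nsmul_eq_mul, mul_div_cancel₀]
        exact_mod_cast (fiber_nonempty f x).card_pos.ne'

theorem abs_sub_blockAvg_le (M : ι → κ → ℝ) (f : ι → α) (g : κ → β) (x : ι) (y : κ) :
    |M x y - 𝔼 x' ∈ fiber f x, 𝔼 y' ∈ fiber g y, M x' y'| ≤
      𝔼 y' ∈ fiber g y, |M x y - M x y'| +
        𝔼 x' ∈ fiber f x, 𝔼 y' ∈ fiber g y, |M x y' - M x' y'| := by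
  have hsplit : M x y - 𝔼 x' ∈ fiber f x, 𝔼 y' ∈ fiber g y, M x' y' =
      𝔼 y' ∈ fiber g y, (M x y - M x y') +
        𝔼 x' ∈ fiber f x, 𝔼 y' ∈ fiber g y, (M x y' - M x' y') := by
    simp only [expect_sub_distrib, expect_const (fiber_nonempty f x),
      expect_const (fiber_nonempty g y)]
    ring
  rw [hsplit]
  refine (abs_add_le _ _).trans (add_le_add (abs_expect_le _ _) ?_)
  exact (abs_expect_le _ _).trans (expect_le_expect fun x' _ => abs_expect_le _ _)

theorem sum_abs_sub_blockAvg_le (M : ι → κ → ℝ) (f : ι → α) (g : κ → β) {Dr Dc : ℝ}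
    (hrow : ∀ x x', f x = f x' → ∑ y, |M x y - M x' y| ≤ Dr)
    (hcol : ∀ y y', g y = g y' → ∑ x, |M x y - M x y'| ≤ Dc) :
    ∑ x, ∑ y, |M x y - 𝔼 x' ∈ fiber f x, 𝔼 y' ∈ fiber g y, M x' y'| ≤
      Fintype.card κ * Dc + Fintype.card ι * Dr := by
  have hcolAvg :
      ∑ x, ∑ y, 𝔼 y' ∈ fiber g y, |M x y - M x y'| ≤ Fintype.card κ * Dc := by
    rw [sum_comm]
    simp_rw [← expect_sum_comm]
    refine (sum_le_card_nsmul _ _ _ fun y _ => expect_le (fiber_nonempty g y) fun y' hy' =>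
      hcol y y' (mem_fiber.1 hy').symm).trans_eq ?_
    simp
  have hrowAvg : ∑ x, ∑ y, 𝔼 x' ∈ fiber f x, 𝔼 y' ∈ fiber g y, |M x y' - M x' y'| ≤
      Fintype.card ι * Dr := by
    simp_rw [← expect_sum_comm, sum_expect_fiber g]
    refine (sum_le_card_nsmul _ _ _ fun x _ => expect_le (fiber_nonempty f x) fun x' hx' =>
      hrow x x' (mem_fiber.1 hx').symm).trans_eq ?_
    simp
  calc _ ≤ ∑ x, ∑ y, (𝔼 y' ∈ fiber g y, |M x y - M x y'| +
          𝔼 x' ∈ fiber f x, 𝔼 y' ∈ fiber g y, |M x y' - M x' y'|) :=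
        sum_le_sum fun x _ => sum_le_sum fun y _ => abs_sub_blockAvg_le M f g x y
    _ ≤ _ := by simp only [sum_add_distrib]; linarith

end BlockAverage

theorem isVertexPartition_singleton (S : Finset V) : IsVertexPartition {S} S :=
  ⟨fun _ hY => (mem_singleton.1 hY).le, fun _ hx => ⟨S, ⟨mem_singleton_self S, hx⟩,
    fun _ hY => mem_singleton.1 hY.1⟩⟩

theorem isVertexPartition_image_fiber [Fintype V] [DecidableEq V] {α : Type*} [DecidableEq α]
    (f : V → α) : IsVertexPartition (univ.image (fiber f)) univ := by
  refine ⟨fun _ _ => subset_univ _, fun x _ => ⟨fiber f x, ⟨mem_image_of_mem _ (mem_univ x),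
    mem_fiber.2 rfl⟩, fun Y ⟨hY, hxY⟩ => ?_⟩⟩
  obtain ⟨y, -, rfl⟩ := mem_image.1 hY
  exact (fiber_eq_of_mem hxY).symm

namespace SimpleGraph

noncomputable def trace {ι : Type*} [Fintype ι] (G : SimpleGraph V) (T : ι → V) (z : V) :
    Finset ι :=
  {i | G.Adj z (T i)}

@[simp]
theorem mem_trace {ι : Type*} [Fintype ι] {G : SimpleGraph V} {T : ι → V} {z : V} {i : ι} :
    i ∈ G.trace T z ↔ G.Adj z (T i) := by
  simp [trace]

theorem gDensity_eq_expect [DecidableEq V] (G : SimpleGraph V) (A B : Finset V) :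
    gDensity G A B = 𝔼 x ∈ A, 𝔼 y ∈ B, G.adjMatrix ℝ x y := by
  simp only [gDensity, expect_eq_sum_div_card, ← sum_div, div_div, adjMatrix_apply]
  rw [card_filter, sum_product]
  push_cast
  rw [mul_comm]

variable [Fintype V] (G : SimpleGraph V)

theorem sum_abs_adjMatrix_sub (x x' : V) :
    ∑ y, |G.adjMatrix ℝ x y - G.adjMatrix ℝ x' y| = hammingDist (G.Adj x) (G.Adj x') := by
  rw [hammingDist, card_filter]
  push_cast
  refine sum_congr rfl fun y _ => ?_
  by_cases h : G.Adj x y <;> by_cases h' : G.Adj x' y <;> simp [h, h']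

theorem sum_abs_adjMatrix_sub_gDensity_fiber_le [DecidableEq V] {α : Type*} [DecidableEq α]
    (f : V → α) {D : ℝ}
    (hf : ∀ x x', f x = f x' → (hammingDist (G.Adj x) (G.Adj x') : ℝ) ≤ D) :
    ∑ x, ∑ y, |G.adjMatrix ℝ x y - gDensity G (fiber f x) (fiber f y)| ≤
      2 * Fintype.card V * D := by
  simp only [gDensity_eq_expect]
  refine (sum_abs_sub_blockAvg_le _ f f (Dr := D) (Dc := D) (fun x x' h => ?_)
    (fun y y' h => ?_)).trans_eq (by ring)
  · rw [sum_abs_adjMatrix_sub]; exact hf x x' h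
  · have := hf y y' h
    rw [← sum_abs_adjMatrix_sub] at this
    simpa only [adjMatrix_apply, G.adj_comm _ y, G.adj_comm _ y'] using this

theorem card_homogeneous_fiber_pairs [DecidableEq V] {α : Type*} [DecidableEq α] (f : V → α)
    {ε : ℝ} (hε : 0 < ε)
    (hf : ∀ x x', f x = f x' →
      (hammingDist (G.Adj x) (G.Adj x') : ℝ) ≤ ε ^ 2 / 2 * Fintype.card V) :
    (1 - ε) * (Fintype.card V : ℝ) ^ 2 ≤
      #{p : V × V | ∀ A ∈ univ.image (fiber f), ∀ B ∈ univ.image (fiber f),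
        p.1 ∈ A → p.2 ∈ B → (gDensity G A B ≤ ε ∨ 1 - ε ≤ gDensity G A B)} := by
  set n : ℝ := (Fintype.card V : ℝ)
  set dens : V → V → ℝ := fun x y => gDensity G (fiber f x) (fiber f y)
  set homog : V × V → Prop := fun p => dens p.1 p.2 ≤ ε ∨ 1 - ε ≤ dens p.1 p.2
  have hsub : ({p | homog p} : Finset (V × V)) ⊆ ({p : V × V | ∀ A ∈ univ.image (fiber f),
      ∀ B ∈ univ.image (fiber f), p.1 ∈ A → p.2 ∈ B →
        (gDensity G A B ≤ ε ∨ 1 - ε ≤ gDensity G A B)} : Finset (V × V)) := by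
    intro p hp
    simp only [mem_filter, mem_univ, true_and] at hp ⊢
    rintro _ hA _ hB hx hy
    obtain ⟨x, -, rfl⟩ := mem_image.1 hA
    obtain ⟨y, -, rfl⟩ := mem_image.1 hB
    rwa [← fiber_eq_of_mem hx, ← fiber_eq_of_mem hy]
  have hbad : ε * #{p : V × V | ¬ homog p} ≤ ε * (ε * n ^ 2) := by
    calc ε * #{p : V × V | ¬ homog p}
        ≤ ∑ p ∈ {p : V × V | ¬ homog p}, |G.adjMatrix ℝ p.1 p.2 - dens p.1 p.2| := by
          rw [mul_comm, ← nsmul_eq_mul]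
          refine card_nsmul_le_sum _ _ _ fun p hp => ?_
          simp only [mem_filter, mem_univ, true_and, homog, not_or, not_le] at hp
          rw [adjMatrix_apply]
          split_ifs
          · exact le_abs.2 (Or.inl (by linarith))
          · exact le_abs.2 (Or.inr (by linarith))
      _ ≤ ∑ p : V × V, |G.adjMatrix ℝ p.1 p.2 - dens p.1 p.2| :=
          sum_le_sum_of_subset_of_nonneg (filter_subset _ _) fun _ _ _ => abs_nonneg _
      _ ≤ ε * (ε * n ^ 2) := by
          rw [Fintype.sum_prod_type]
          exact (G.sum_abs_adjMatrix_sub_gDensity_fiber_le f hf).trans_eq (by ring)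
  have hsplit := card_filter_add_card_filter_not (s := (univ : Finset (V × V))) homog
  rw [card_univ, Fintype.card_prod] at hsplit
  have hcast : (#{p : V × V | homog p} : ℝ) + #{p : V × V | ¬ homog p} = n ^ 2 := by
    rw [sq, ← Nat.cast_add, ← Nat.cast_mul]; exact congrArg _ hsplit
  have := le_of_mul_le_mul_left hbad hε
  have := (Nat.cast_le (α := ℝ)).2 (card_le_card hsub)
  linarith

end SimpleGraph

section VCdim

variable [Fintype V] [DecidableEq V] {G : SimpleGraph V} {d : ℕ}

theorem VCdimLE.card_le_of_shatters_trace (hG : VCdimLE G d) {ι : Type*} [Fintype ι]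
    (T : ι → V) (Z : Finset V) {s : Finset ι} (hs : (Z.image (G.trace T)).Shatters s) :
    #s ≤ d := by
  have hinj : Set.InjOn T s := by
    intro i hi j hj hij
    by_contra hne
    obtain ⟨u, hu, hsu⟩ := hs.exists_inter_eq_singleton hi
    obtain ⟨z, -, rfl⟩ := mem_image.1 hu
    have hi' : i ∈ s ∩ G.trace T z := hsu ▸ mem_singleton_self i
    have hj' : j ∈ s ∩ G.trace T z := by
      simp only [mem_inter, SimpleGraph.mem_trace] at hi' ⊢
      exact ⟨hj, hij ▸ hi'.2⟩
    rw [hsu, mem_singleton] at hj'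
    exact hne hj'.symm
  rw [← card_image_of_injOn hinj]
  refine hG _ fun W hW => ?_
  obtain ⟨u, hu, hsu⟩ := hs (filter_subset (fun i => T i ∈ W) s)
  obtain ⟨z, -, rfl⟩ := mem_image.1 hu
  have hmem : ∀ i ∈ s, (G.Adj z (T i) ↔ T i ∈ W) := fun i hi => by
    simpa [hi] using congrArg (i ∈ ·) hsu
  refine ⟨z, ?_⟩
  ext w
  simp only [mem_filter]
  constructor
  · rintro ⟨hw, hadj⟩
    obtain ⟨i, hi, rfl⟩ := mem_image.1 hw
    exact (hmem i hi).1 hadj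
  · intro hw
    obtain ⟨i, hi, rfl⟩ := mem_image.1 (hW hw)
    exact ⟨hW hw, (hmem i hi).2 hw⟩

theorem VCdimLE.card_le_of_injOn_trace (hG : VCdimLE G d) {ι : Type*} [Fintype ι] (T : ι → V)
    {S : Finset V} (hS : Set.InjOn (fun z => G.Adj z ∘ T) S) :
    #S ≤ (Fintype.card ι + 1) ^ d := by
  set 𝒜 := S.image (G.trace T)
  have hinj : Set.InjOn (G.trace T) S := fun z hz z' hz' h => hS hz hz' <| funext fun i =>
    propext <| by simpa using congrArg (i ∈ ·) h
  have hvc : 𝒜.vcDim ≤ d :=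
    Finset.sup_le fun s hs => hG.card_le_of_shatters_trace T S (mem_shatterer.1 hs)
  calc #S = #𝒜 := (card_image_of_injOn hinj).symm
    _ ≤ #𝒜.shatterer := card_le_card_shatterer 𝒜
    _ ≤ ∑ k ∈ Iic 𝒜.vcDim, (Fintype.card ι).choose k := card_shatterer_le_sum_vcDim
    _ ≤ ∑ k ∈ Iic d, (Fintype.card ι).choose k := sum_le_sum_of_subset (Iic_subset_Iic.2 hvc)
    _ ≤ (Fintype.card ι + 1) ^ d := sum_choose_le_succ_pow _ _

theorem VCdimLE.card_le_of_pairwise_lt_hammingDist (hG : VCdimLE G d) {δ : ℝ} (hδ : 0 < δ)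
    (hδ1 : δ < 1) {S : Finset V}
    (hS : (S : Set V).Pairwise fun z z' => δ * Fintype.card V < hammingDist (G.Adj z) (G.Adj z')) :
    (#S : ℝ) ≤ (2 * (4 * d + 6) ^ (2 * d + 3)) ^ d * δ⁻¹ ^ ((2 * d + 3) * d) := by
  obtain ⟨t, hgrow, hbound⟩ := exists_succ_pow_lt_one_add_pow (2 * d + 2) hδ hδ1.le
  have ht0 : t ≠ 0 := by rintro rfl; simp at hgrow
  replace hbound : (t : ℝ) + 1 ≤ 2 * (4 * d + 6) ^ (2 * d + 3) * δ⁻¹ ^ (2 * d + 3) :=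
    hbound.trans_eq (by push_cast; ring_nf)
  have hcard : #S ≤ (t + 1) ^ d := by
    by_contra! hlarge
    obtain ⟨S', hS'S, hS'⟩ := exists_subset_card_eq hlarge
    obtain ⟨z, hz⟩ : S'.Nonempty := card_pos.1 (by omega)
    have : Nonempty V := ⟨z⟩
    have hsmall : (#S' : ℝ) ^ 2 * (1 - δ) ^ t < 1 := by
      have hS'le : (#S' : ℝ) ≤ (t + 1) ^ (d + 1) := by
        have : #S' ≤ (t + 1) ^ (d + 1) := by
          rw [hS', pow_succ, Nat.succ_eq_add_one]
          nlinarith [Nat.one_le_pow d (t + 1) (by omega), Nat.one_le_iff_ne_zero.2 ht0]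
        exact_mod_cast this
      calc (#S' : ℝ) ^ 2 * (1 - δ) ^ t ≤ ((t + 1) ^ (d + 1)) ^ 2 * (1 - δ) ^ t := by gcongr
        _ = ((t : ℝ) + 1) ^ (2 * d + 2) * (1 - δ) ^ t := by ring
        _ < (1 + δ) ^ t * (1 - δ) ^ t := by gcongr
        _ = (1 - δ ^ 2) ^ t := by rw [← mul_pow]; ring
        _ ≤ 1 := pow_le_one₀ (by nlinarith) (by nlinarith)
    obtain ⟨T, hT⟩ :=
      exists_injOn_comp_of_lt_hammingDist G.Adj (hS.mono (coe_subset.2 hS'S)) hδ1.le hsmall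
    have := hG.card_le_of_injOn_trace T hT
    simp only [Fintype.card_fin] at this
    omega
  calc (#S : ℝ) ≤ ((t : ℝ) + 1) ^ d := by exact_mod_cast hcard
    _ ≤ (2 * (4 * d + 6) ^ (2 * d + 3) * δ⁻¹ ^ (2 * d + 3)) ^ d := by gcongr
    _ = (2 * (4 * d + 6) ^ (2 * d + 3)) ^ d * δ⁻¹ ^ ((2 * d + 3) * d) := by
      rw [mul_pow, ← pow_mul]

theorem VCdimLE.exists_homogeneous_partition (hG : VCdimLE G d) {ε : ℝ} (hε : 0 < ε)
    (hε1 : ε < 1) :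
    ∃ P : Finset (Finset V), IsVertexPartition P univ ∧
      (#P : ℝ) ≤ (2 * (4 * d + 6) ^ (2 * d + 3)) ^ d * 4 ^ ((2 * d + 3) * d) *
        ε⁻¹ ^ (2 * ((2 * d + 3) * d)) ∧
      (1 - ε) * (Fintype.card V : ℝ) ^ 2 ≤
        #{p : V × V | ∀ A ∈ P, ∀ B ∈ P, p.1 ∈ A → p.2 ∈ B →
          (gDensity G A B ≤ ε ∨ 1 - ε ≤ gDensity G A B)} := by
  set n : ℝ := (Fintype.card V : ℝ)
  set δ : ℝ := ε ^ 2 / 4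
  have hδ : 0 < δ := by positivity
  obtain ⟨S, hsep, hnet⟩ := exists_maximal_pairwise
    (fun z z' => δ * n < hammingDist (G.Adj z) (G.Adj z'))
    (fun z z' h => by rw [hammingDist_comm]; exact h)
    (fun z => by simp only [hammingDist_self, CharP.cast_eq_zero, not_lt]; positivity)
  choose center hcenterS hcenter using hnet
  have hnear : ∀ x, (hammingDist (G.Adj x) (G.Adj (center x)) : ℝ) ≤ δ * n :=
    fun x => not_lt.1 (hcenter x)
  refine ⟨univ.image (fiber center), isVertexPartition_image_fiber center, ?_,
    G.card_homogeneous_fiber_pairs center hε fun x x' h => ?_⟩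
  · have hcard : #(univ.image (fiber center)) ≤ #S :=
      (card_image_fiber_le center).trans (card_le_card fun _ h => by
        obtain ⟨x, -, rfl⟩ := mem_image.1 h; exact hcenterS x)
    calc (#(univ.image (fiber center)) : ℝ) ≤ #S := by exact_mod_cast hcard
      _ ≤ (2 * (4 * d + 6) ^ (2 * d + 3)) ^ d * δ⁻¹ ^ ((2 * d + 3) * d) :=
        hG.card_le_of_pairwise_lt_hammingDist hδ (by simp only [δ]; nlinarith) hsep
      _ = _ := by
        have hδinv : δ⁻¹ = 4 * ε⁻¹ ^ 2 := by simp only [δ]; field_simp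
        rw [hδinv, mul_pow (4 : ℝ), ← pow_mul]
        ring
  · have htri := hammingDist_triangle (G.Adj x) (G.Adj (center x)) (G.Adj x')
    rw [hammingDist_comm (G.Adj (center x)), h] at htri
    calc (hammingDist (G.Adj x) (G.Adj x') : ℝ)
        ≤ hammingDist (G.Adj x) (G.Adj (center x')) +
            hammingDist (G.Adj x') (G.Adj (center x')) := by
          exact_mod_cast htri
      _ ≤ ε ^ 2 / 2 * n := by
        have hx : (hammingDist (G.Adj x) (G.Adj (center x')) : ℝ) ≤ δ * n := h ▸ hnear x
        have hx' := hnear x'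
        simp only [δ] at hx hx'
        linarith

end VCdim

theorem graph_poly_regularity_general (d : ℕ) :
    ∃ c : ℕ, ∀ ε : ℝ, 0 < ε → ε < 1 →
      ∀ (V : Type) [Fintype V] [DecidableEq V] (G : SimpleGraph V),
        VCdimLE G d →
        ∃ P : Finset (Finset V), IsVertexPartition P Finset.univ ∧
          ((P.card : ℝ) ≤ ε⁻¹ ^ c) ∧
          (1 - ε) * ((Fintype.card V : ℝ)) ^ 2 ≤
            (((Finset.univ : Finset (V × V)).filter fun p =>
              ∀ A ∈ P, ∀ B ∈ P, p.1 ∈ A → p.2 ∈ B →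
                (gDensity G A B ≤ ε ∨ 1 - ε ≤ gDensity G A B)).card : ℝ) := by
  refine ⟨(2 * (4 * d + 6) ^ (2 * d + 3)) ^ d * 4 ^ ((2 * d + 3) * d) + 2 * ((2 * d + 3) * d),
    fun ε hε hε1 V _ _ G hG => ?_⟩
  rcases le_or_gt ε (1 / 2) with hε2 | hε2
  · obtain ⟨P, hP, hcard, hhomog⟩ := hG.exists_homogeneous_partition hε hε1
    exact ⟨P, hP, le_inv_pow_add_of_le_mul hε hε2 (by exact_mod_cast hcard), hhomog⟩
  · refine ⟨{univ}, isVertexPartition_singleton univ, ?_, ?_⟩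
    · simpa using one_le_pow₀ (one_le_inv₀ hε |>.2 hε1.le)
    · have hall : ∀ x : ℝ, x ≤ ε ∨ 1 - ε ≤ x :=
        fun x => (le_or_gt x ε).imp_right fun h => by linarith
      simp only [hall, implies_true, filter_true, card_univ, Fintype.card_prod]
      push_cast
      nlinarith [sq_nonneg (Fintype.card V : ℝ)]

/-- Ultra-strong regularity with polynomially many parts for graphs of bounded
VC dimension (Alon–Fischer–Newman, Lovász–Szegedy, Fox–Pach–Suk). -/
theorem graph_poly_regularity (d : ℕ) (hd : 1 ≤ d) :
    ∃ c : ℕ, ∀ ε : ℝ, 0 < ε → ε < 1 →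
      ∀ (V : Type) [Fintype V] [DecidableEq V] (G : SimpleGraph V),
        VCdimLE G d →
        ∃ P : Finset (Finset V), IsVertexPartition P Finset.univ ∧
          ((P.card : ℝ) ≤ ε⁻¹ ^ c) ∧
          (1 - ε) * ((Fintype.card V : ℝ)) ^ 2 ≤
            (((Finset.univ : Finset (V × V)).filter fun p =>
              ∀ A ∈ P, ∀ B ∈ P, p.1 ∈ A → p.2 ∈ B →
                (gDensity G A B ≤ ε ∨ 1 - ε ≤ gDensity G A B)).card : ℝ) :=
  graph_poly_regularity_general d
end

section
/- There is an absolute constant c such that for every η > 0 there exists K ≤ twr(⌈η^{−c}⌉) such that every finite 3-uniform hypergraph H admits a weakly η-quasirandom partition of V(H) into at most K parts. -/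
open scoped Classical

variable {V : Type}

noncomputable def eH {V : Type} [DecidableEq V] (H : Finset (Finset V))
    (X1 X2 X3 : Finset V) : ℝ :=
  (((X1 ×ˢ X2 ×ˢ X3).filter fun p => ({p.1, p.2.1, p.2.2} : Finset V) ∈ H).card : ℝ)

noncomputable def dH {V : Type} [DecidableEq V] (H : Finset (Finset V))
    (X1 X2 X3 : Finset V) : ℝ :=
  eH H X1 X2 X3 / ((X1.card : ℝ) * (X2.card : ℝ) * (X3.card : ℝ))

def weakQuasi {V : Type} [DecidableEq V] (H : Finset (Finset V)) (X1 X2 X3 : Finset V)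
    (η : ℝ) : Prop :=
  ∀ X1' ⊆ X1, ∀ X2' ⊆ X2, ∀ X3' ⊆ X3,
    |eH H X1' X2' X3' -
        dH H X1 X2 X3 * (X1'.card : ℝ) * (X2'.card : ℝ) * (X3'.card : ℝ)| ≤
      η * (X1.card : ℝ) * (X2.card : ℝ) * (X3.card : ℝ)

/-! Energy increment. The energy of a vertex partition `P` is the sum of
`e(Y₁, Y₂, Y₃)² / (|Y₁| |Y₂| |Y₃|)` over triples of parts; it lies in `[0, n³]`. If `P` is not
weakly `η`-quasirandom, the triples of parts without the property cover more than `η n³` vertex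
triples, and each comes with sets `X_i ⊆ Y_i` witnessing it. Cutting every part along all these
`≤ 3 |P|³` witnesses leaves at most `|P| 2^(3 |P|³) ≤ twr 5 |P|` parts and, by Cauchy–Schwarz with
a defect term, raises the energy by at least `η³ n³`. So within `⌊η⁻³⌋ + 1` rounds the partition
is quasirandom, with at most `tower (5 (⌊η⁻³⌋ + 1))` parts, which is `≤ tower ⌈η⁻⁶⌉` when
`η < 1/2`. For `η ≥ 1/2` nothing needs to be done: comparing a sub-box with the edges and the
non-edges of the box shows that every triple of sets is weakly `η`-quasirandom. -/

namespace WeakRegularity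

open Finset Finpartition

theorem sum_product_biUnion {ι α M : Type*} [DecidableEq α] [AddCommMonoid M]
    {I₁ I₂ I₃ : Finset ι} {S : ι → Finset α} (h₁ : (I₁ : Set ι).PairwiseDisjoint S)
    (h₂ : (I₂ : Set ι).PairwiseDisjoint S) (h₃ : (I₃ : Set ι).PairwiseDisjoint S)
    (g : α × α × α → M) :
    ∑ i ∈ I₁ ×ˢ I₂ ×ˢ I₃, ∑ p ∈ S i.1 ×ˢ S i.2.1 ×ˢ S i.2.2, g p =
      ∑ p ∈ I₁.biUnion S ×ˢ I₂.biUnion S ×ˢ I₃.biUnion S, g p := by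
  simp only [sum_product, sum_biUnion h₁, sum_biUnion h₂, sum_biUnion h₃]
  refine sum_congr rfl fun i₁ _ => ?_
  conv_rhs => rw [sum_comm]
  refine sum_congr rfl fun i₂ _ => ?_
  rw [sum_comm]
  exact sum_congr rfl fun x _ => sum_comm

theorem sq_sum_div_add_sq_sub_div_le_sum_sq_div {ι : Type*} {s t : Finset ι} (hts : t ⊆ s)
    (f : ι → ℝ) {g : ι → ℝ} (hg : ∀ i ∈ s, 0 < g i) :
    (∑ i ∈ s, f i) ^ 2 / (∑ i ∈ s, g i) +
        (∑ i ∈ t, f i - (∑ i ∈ s, f i) / (∑ i ∈ s, g i) * ∑ i ∈ t, g i) ^ 2 / (∑ i ∈ t, g i) ≤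
      ∑ i ∈ s, f i ^ 2 / g i := by
  rcases s.eq_empty_or_nonempty with rfl | hs
  · simp [subset_empty.1 hts]
  set d := (∑ i ∈ s, f i) / (∑ i ∈ s, g i)
  have hsum : 0 < ∑ i ∈ s, g i := sum_pos hg hs
  have hsplit : ∑ i ∈ s, f i ^ 2 / g i =
      ∑ i ∈ s, (f i - d * g i) ^ 2 / g i + (∑ i ∈ s, f i) ^ 2 / ∑ i ∈ s, g i := by
    have hpoint : ∀ i ∈ s,
        f i ^ 2 / g i = (f i - d * g i) ^ 2 / g i + (2 * d * f i - d ^ 2 * g i) := by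
      intro i hi
      field_simp [(hg i hi).ne']
      ring
    rw [sum_congr rfl hpoint, sum_add_distrib, sum_sub_distrib, ← mul_sum, ← mul_sum]
    congr 1
    unfold d
    field_simp
    ring
  have hdefect : (∑ i ∈ t, f i - d * ∑ i ∈ t, g i) ^ 2 / ∑ i ∈ t, g i ≤
      ∑ i ∈ s, (f i - d * g i) ^ 2 / g i := calc
    _ = (∑ i ∈ t, (f i - d * g i)) ^ 2 / ∑ i ∈ t, g i := by rw [sum_sub_distrib, mul_sum]
    _ ≤ ∑ i ∈ t, (f i - d * g i) ^ 2 / g i :=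
      sq_sum_div_le_sum_sq_div t _ fun i hi => hg i (hts hi)
    _ ≤ ∑ i ∈ s, (f i - d * g i) ^ 2 / g i :=
      sum_le_sum_of_subset_of_nonneg hts fun i hi _ => div_nonneg (sq_nonneg _) (hg i hi).le
  linarith

section Tower

theorem twr_add (a b x : ℕ) : twr (a + b) x = twr a (twr b x) := by
  induction a with
  | zero => simp [twr]
  | succ a ih => rw [Nat.add_right_comm, twr, ih, twr]

theorem le_twr (n x : ℕ) : x ≤ twr n x := by
  induction n with
  | zero => exact le_rfl
  | succ n ih => exact ih.trans Nat.lt_two_pow_self.le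

theorem twr_mono (n : ℕ) : Monotone (twr n) := by
  induction n with
  | zero => exact monotone_id
  | succ n ih => exact fun x y hxy => Nat.pow_le_pow_right two_pos (ih hxy)

theorem tower_mono : Monotone tower := fun m n hmn => by
  rw [tower, tower, ← Nat.sub_add_cancel hmn, twr_add]
  exact le_twr _ _

theorem mul_two_pow_le_twr_five (k : ℕ) : k * 2 ^ (3 * k ^ 3) ≤ twr 5 k := by
  have hk : k < 2 ^ k := Nat.lt_two_pow_self
  have h₁ : k + 3 * k ^ 3 ≤ 2 ^ (3 * k + 2) := calc
    k + 3 * k ^ 3 ≤ 4 * k ^ 3 := by have := Nat.le_self_pow three_ne_zero k; omega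
    _ ≤ 4 * (2 ^ k) ^ 3 := by gcongr
    _ = 2 ^ (3 * k + 2) := by ring
  have h₂ : 3 * k + 2 ≤ 2 ^ (k + 2) := by rw [pow_add]; omega
  have h₃ : k + 2 ≤ twr 2 k := calc
    k + 2 ≤ 2 ^ (k + 1) := by rw [pow_succ]; omega
    _ ≤ twr 2 k := Nat.pow_le_pow_right two_pos hk
  calc k * 2 ^ (3 * k ^ 3) ≤ 2 ^ k * 2 ^ (3 * k ^ 3) := by gcongr
    _ = 2 ^ (k + 3 * k ^ 3) := by rw [pow_add]
    _ ≤ twr 3 (k + 2) :=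
      Nat.pow_le_pow_right two_pos (h₁.trans (Nat.pow_le_pow_right two_pos h₂))
    _ ≤ twr 3 (twr 2 k) := twr_mono 3 h₃
    _ = twr 5 k := (twr_add 3 2 k).symm

theorem exists_nat_gt_pow_three_and_five_mul_le_ceil {x : ℝ} (hx : 2 ≤ x) :
    ∃ s : ℕ, x ^ 3 < s ∧ 5 * s ≤ ⌈x ^ 6⌉₊ := by
  refine ⟨⌊x ^ 3⌋₊ + 1, by push_cast; exact Nat.lt_floor_add_one _, ?_⟩
  have hfloor := Nat.floor_le (by positivity : 0 ≤ x ^ 3)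
  have h8 : 8 ≤ x ^ 3 := by nlinarith [pow_le_pow_left₀ (by norm_num) hx 3]
  have : ((5 * (⌊x ^ 3⌋₊ + 1) : ℕ) : ℝ) ≤ x ^ 6 := by push_cast; nlinarith
  exact_mod_cast this.trans (Nat.le_ceil _)

end Tower

def boxCard (X₁ X₂ X₃ : Finset V) : ℝ := (X₁.card : ℝ) * (X₂.card : ℝ) * (X₃.card : ℝ)

theorem boxCard_eq_sum (X₁ X₂ X₃ : Finset V) :
    boxCard X₁ X₂ X₃ = ∑ _p ∈ X₁ ×ˢ X₂ ×ˢ X₃, (1 : ℝ) := by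
  simp [boxCard, mul_assoc]

theorem boxCard_pos {X₁ X₂ X₃ : Finset V} (h₁ : X₁.Nonempty) (h₂ : X₂.Nonempty)
    (h₃ : X₃.Nonempty) : 0 < boxCard X₁ X₂ X₃ := by
  unfold boxCard
  have := h₁.card_pos; have := h₂.card_pos; have := h₃.card_pos
  positivity

theorem boxCard_nonneg (X₁ X₂ X₃ : Finset V) : 0 ≤ boxCard X₁ X₂ X₃ := by
  unfold boxCard
  positivity

theorem boxCard_mono {X₁ X₂ X₃ Y₁ Y₂ Y₃ : Finset V} (h₁ : X₁ ⊆ Y₁) (h₂ : X₂ ⊆ Y₂)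
    (h₃ : X₃ ⊆ Y₃) : boxCard X₁ X₂ X₃ ≤ boxCard Y₁ Y₂ Y₃ := by
  unfold boxCard
  gcongr

section Energy

variable [DecidableEq V]

theorem eH_eq_sum (H : Finset (Finset V)) (X₁ X₂ X₃ : Finset V) :
    eH H X₁ X₂ X₃ = ∑ p ∈ X₁ ×ˢ X₂ ×ˢ X₃,
      if ({p.1, p.2.1, p.2.2} : Finset V) ∈ H then (1 : ℝ) else 0 :=
  natCast_card_filter _ _

theorem eH_nonneg (H : Finset (Finset V)) (X₁ X₂ X₃ : Finset V) : 0 ≤ eH H X₁ X₂ X₃ :=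
  Nat.cast_nonneg _

theorem eH_le_boxCard (H : Finset (Finset V)) (X₁ X₂ X₃ : Finset V) :
    eH H X₁ X₂ X₃ ≤ boxCard X₁ X₂ X₃ := by
  rw [eH_eq_sum, boxCard_eq_sum]
  exact sum_le_sum fun p _ => by split_ifs <;> norm_num

theorem eH_mono (H : Finset (Finset V)) {X₁ X₂ X₃ Y₁ Y₂ Y₃ : Finset V} (h₁ : X₁ ⊆ Y₁)
    (h₂ : X₂ ⊆ Y₂) (h₃ : X₃ ⊆ Y₃) : eH H X₁ X₂ X₃ ≤ eH H Y₁ Y₂ Y₃ := by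
  unfold eH
  gcongr

theorem eH_sub_eH_le_boxCard_sub_boxCard (H : Finset (Finset V))
    {X₁ X₂ X₃ Y₁ Y₂ Y₃ : Finset V} (h₁ : X₁ ⊆ Y₁) (h₂ : X₂ ⊆ Y₂) (h₃ : X₃ ⊆ Y₃) :
    eH H Y₁ Y₂ Y₃ - eH H X₁ X₂ X₃ ≤ boxCard Y₁ Y₂ Y₃ - boxCard X₁ X₂ X₃ := by
  have hbox : X₁ ×ˢ X₂ ×ˢ X₃ ⊆ Y₁ ×ˢ Y₂ ×ˢ Y₃ :=
    product_subset_product h₁ (product_subset_product h₂ h₃)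
  rw [eH_eq_sum, eH_eq_sum, boxCard_eq_sum, boxCard_eq_sum, ← sum_sdiff hbox,
    ← sum_sdiff (f := fun _ => (1 : ℝ)) hbox, add_sub_cancel_right, add_sub_cancel_right]
  exact sum_le_sum fun p _ => by split_ifs <;> norm_num

theorem weakQuasi_of_half_le (H : Finset (Finset V)) {η : ℝ} (hη : 1 / 2 ≤ η)
    (Y₁ Y₂ Y₃ : Finset V) : weakQuasi H Y₁ Y₂ Y₃ η := by
  intro X₁ h₁ X₂ h₂ X₃ h₃
  set N := boxCard Y₁ Y₂ Y₃
  set E := eH H Y₁ Y₂ Y₃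
  set p := boxCard X₁ X₂ X₃
  set e := eH H X₁ X₂ X₃
  have he : 0 ≤ e := eH_nonneg H _ _ _
  have hep : e ≤ p := eH_le_boxCard H _ _ _
  have hpN : p ≤ N := boxCard_mono h₁ h₂ h₃
  have heE : e ≤ E := eH_mono H h₁ h₂ h₃
  have hEN : E - e ≤ N - p := eH_sub_eH_le_boxCard_sub_boxCard H h₁ h₂ h₃
  have hlhs : dH H Y₁ Y₂ Y₃ * (X₁.card : ℝ) * (X₂.card : ℝ) * (X₃.card : ℝ) = E / N * p := by
    simp only [dH, E, N, p, boxCard]; ring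
  have hrhs : η * (Y₁.card : ℝ) * (Y₂.card : ℝ) * (Y₃.card : ℝ) = η * N := by
    simp only [N, boxCard]; ring
  rw [hlhs, hrhs, abs_le]
  rcases (he.trans (hep.trans hpN)).eq_or_lt with hN | hN
  · have hp : p = 0 := le_antisymm (hN ▸ hpN) (he.trans hep)
    simp [← hN, hp, le_antisymm (hp ▸ hep) he]
  set d := E / N
  have hEd : E = d * N := (div_mul_cancel₀ E hN.ne').symm
  have hd : 0 ≤ d := div_nonneg (he.trans heE) hN.le
  rw [hEd] at heE hEN
  -- `|e - d p| ≤ min (d, 1 - d) N`: use `e ≤ E = d N` if `d ≤ 1/2`, and `E - e ≤ N - p` if not.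
  constructor <;> rcases le_total d (1 / 2) with hd2 | hd2 <;>
    nlinarith [mul_le_mul_of_nonneg_left hpN hd, mul_le_mul_of_nonneg_left hep hd]

theorem sum_eH_product (H : Finset (Finset V)) {A B C : Finset (Finset V)}
    (hA : (A : Set (Finset V)).PairwiseDisjoint id)
    (hB : (B : Set (Finset V)).PairwiseDisjoint id)
    (hC : (C : Set (Finset V)).PairwiseDisjoint id) :
    ∑ Z ∈ A ×ˢ B ×ˢ C, eH H Z.1 Z.2.1 Z.2.2 =
      eH H (A.biUnion id) (B.biUnion id) (C.biUnion id) := by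
  simp only [eH_eq_sum]
  exact sum_product_biUnion hA hB hC _

theorem sum_boxCard_product {A B C : Finset (Finset V)}
    (hA : (A : Set (Finset V)).PairwiseDisjoint id)
    (hB : (B : Set (Finset V)).PairwiseDisjoint id)
    (hC : (C : Set (Finset V)).PairwiseDisjoint id) :
    ∑ Z ∈ A ×ˢ B ×ˢ C, boxCard Z.1 Z.2.1 Z.2.2 =
      boxCard (A.biUnion id) (B.biUnion id) (C.biUnion id) := by
  simp only [boxCard_eq_sum]
  exact sum_product_biUnion hA hB hC _

noncomputable def energy (H : Finset (Finset V)) (A B C : Finset (Finset V)) : ℝ :=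
  ∑ Z ∈ A ×ˢ B ×ˢ C, eH H Z.1 Z.2.1 Z.2.2 ^ 2 / boxCard Z.1 Z.2.1 Z.2.2

theorem energy_nonneg (H : Finset (Finset V)) (A B C : Finset (Finset V)) :
    0 ≤ energy H A B C :=
  sum_nonneg fun _ _ => div_nonneg (sq_nonneg _) (boxCard_nonneg _ _ _)

theorem sq_div_le_energy {Y₁ Y₂ Y₃ : Finset V} (H : Finset (Finset V)) (P₁ : Finpartition Y₁)
    (P₂ : Finpartition Y₂) (P₃ : Finpartition Y₃) :
    eH H Y₁ Y₂ Y₃ ^ 2 / boxCard Y₁ Y₂ Y₃ ≤ energy H P₁.parts P₂.parts P₃.parts := by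
  have hsed := sq_sum_div_le_sum_sq_div (P₁.parts ×ˢ P₂.parts ×ˢ P₃.parts)
    (fun Z => eH H Z.1 Z.2.1 Z.2.2) (g := fun Z => boxCard Z.1 Z.2.1 Z.2.2) fun Z hZ => by
      simp only [mem_product] at hZ
      exact boxCard_pos (P₁.nonempty_of_mem_parts hZ.1) (P₂.nonempty_of_mem_parts hZ.2.1)
        (P₃.nonempty_of_mem_parts hZ.2.2)
  rwa [sum_eH_product H P₁.disjoint P₂.disjoint P₃.disjoint,
    sum_boxCard_product P₁.disjoint P₂.disjoint P₃.disjoint,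
    P₁.biUnion_parts, P₂.biUnion_parts, P₃.biUnion_parts] at hsed

theorem sq_div_add_sq_div_le_energy_atomise (H : Finset (Finset V)) {F : Finset (Finset V)}
    {X₁ X₂ X₃ Y₁ Y₂ Y₃ : Finset V} (hX₁ : X₁ ∈ F) (hX₂ : X₂ ∈ F) (hX₃ : X₃ ∈ F)
    (hXY₁ : X₁ ⊆ Y₁) (hXY₂ : X₂ ⊆ Y₂) (hXY₃ : X₃ ⊆ Y₃) :
    eH H Y₁ Y₂ Y₃ ^ 2 / boxCard Y₁ Y₂ Y₃ +
        (eH H X₁ X₂ X₃ - eH H Y₁ Y₂ Y₃ / boxCard Y₁ Y₂ Y₃ * boxCard X₁ X₂ X₃) ^ 2 /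
          boxCard X₁ X₂ X₃ ≤
      energy H (atomise Y₁ F).parts (atomise Y₂ F).parts (atomise Y₃ F).parts := by
  -- `X_i` is the union of the atoms of `Y_i` inside it, so the sub-box is a sub-sum.
  let atomsIn (Y X : Finset V) := {u ∈ (atomise Y F).parts | u ⊆ X ∧ u.Nonempty}
  have hdisj (Y X : Finset V) : (atomsIn Y X : Set (Finset V)).PairwiseDisjoint id :=
    (atomise Y F).disjoint.subset (coe_subset.2 (filter_subset _ _))
  have hsed := sq_sum_div_add_sq_sub_div_le_sum_sq_div
    (s := (atomise Y₁ F).parts ×ˢ (atomise Y₂ F).parts ×ˢ (atomise Y₃ F).parts)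
    (t := atomsIn Y₁ X₁ ×ˢ atomsIn Y₂ X₂ ×ˢ atomsIn Y₃ X₃)
    (product_subset_product (filter_subset _ _)
      (product_subset_product (filter_subset _ _) (filter_subset _ _)))
    (fun Z => eH H Z.1 Z.2.1 Z.2.2) (g := fun Z => boxCard Z.1 Z.2.1 Z.2.2) fun Z hZ => by
      simp only [mem_product] at hZ
      exact boxCard_pos ((atomise Y₁ F).nonempty_of_mem_parts hZ.1)
        ((atomise Y₂ F).nonempty_of_mem_parts hZ.2.1)
        ((atomise Y₃ F).nonempty_of_mem_parts hZ.2.2)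
  rwa [sum_eH_product H (atomise Y₁ F).disjoint (atomise Y₂ F).disjoint (atomise Y₃ F).disjoint,
    sum_boxCard_product (atomise Y₁ F).disjoint (atomise Y₂ F).disjoint (atomise Y₃ F).disjoint,
    sum_eH_product H (hdisj Y₁ X₁) (hdisj Y₂ X₂) (hdisj Y₃ X₃),
    sum_boxCard_product (hdisj Y₁ X₁) (hdisj Y₂ X₂) (hdisj Y₃ X₃),
    biUnion_parts, biUnion_parts, biUnion_parts,
    biUnion_filter_atomise hX₁ hXY₁, biUnion_filter_atomise hX₂ hXY₂,
    biUnion_filter_atomise hX₃ hXY₃] at hsed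

theorem sq_div_add_sq_mul_le_energy_atomise (H : Finset (Finset V)) {F : Finset (Finset V)}
    {X₁ X₂ X₃ Y₁ Y₂ Y₃ : Finset V} (hX₁ : X₁ ∈ F) (hX₂ : X₂ ∈ F) (hX₃ : X₃ ∈ F)
    (hXY₁ : X₁ ⊆ Y₁) (hXY₂ : X₂ ⊆ Y₂) (hXY₃ : X₃ ⊆ Y₃) {η : ℝ} (hη : 0 ≤ η)
    (hdev : η * (Y₁.card : ℝ) * (Y₂.card : ℝ) * (Y₃.card : ℝ) <
      |eH H X₁ X₂ X₃ - dH H Y₁ Y₂ Y₃ * (X₁.card : ℝ) * (X₂.card : ℝ) * (X₃.card : ℝ)|) :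
    eH H Y₁ Y₂ Y₃ ^ 2 / boxCard Y₁ Y₂ Y₃ + η ^ 2 * boxCard Y₁ Y₂ Y₃ ≤
      energy H (atomise Y₁ F).parts (atomise Y₂ F).parts (atomise Y₃ F).parts := by
  set D := eH H X₁ X₂ X₃ - eH H Y₁ Y₂ Y₃ / boxCard Y₁ Y₂ Y₃ * boxCard X₁ X₂ X₃
  replace hdev : η * boxCard Y₁ Y₂ Y₃ < |D| := by
    calc η * boxCard Y₁ Y₂ Y₃ = η * (Y₁.card : ℝ) * (Y₂.card : ℝ) * (Y₃.card : ℝ) := by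
          simp only [boxCard]; ring
      _ < _ := hdev
      _ = |D| := by simp only [D, dH, boxCard]; ring_nf
  have hY := boxCard_nonneg Y₁ Y₂ Y₃
  have hX : 0 < boxCard X₁ X₂ X₃ := by
    refine (boxCard_nonneg X₁ X₂ X₃).lt_of_ne fun h => ?_
    have he : eH H X₁ X₂ X₃ = 0 := le_antisymm (h ▸ eH_le_boxCard H _ _ _) (eH_nonneg H _ _ _)
    simp only [D, he, ← h, mul_zero, sub_zero, abs_zero] at hdev
    exact hdev.not_ge (by positivity)
  have hsq : (η * boxCard Y₁ Y₂ Y₃) ^ 2 < D ^ 2 := by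
    rw [← sq_abs D]
    exact pow_lt_pow_left₀ hdev (by positivity) two_ne_zero
  have hgain : η ^ 2 * boxCard Y₁ Y₂ Y₃ ≤ D ^ 2 / boxCard X₁ X₂ X₃ := by
    rw [le_div_iff₀ hX]
    have := mul_le_mul_of_nonneg_left (boxCard_mono hXY₁ hXY₂ hXY₃)
      (by positivity : 0 ≤ η ^ 2 * boxCard Y₁ Y₂ Y₃)
    nlinarith
  linarith [sq_div_add_sq_div_le_energy_atomise H hX₁ hX₂ hX₃ hXY₁ hXY₂ hXY₃]

noncomputable def badTriples (H : Finset (Finset V)) (η : ℝ) (P : Finset (Finset V)) :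
    Finset (Finset V × Finset V × Finset V) :=
  (P ×ˢ P ×ˢ P).filter fun Y => ¬ weakQuasi H Y.1 Y.2.1 Y.2.2 η

theorem exists_card_le_and_sq_div_add_sq_mul_le_energy_atomise (H : Finset (Finset V)) {η : ℝ}
    (hη : 0 ≤ η) (P : Finset (Finset V)) :
    ∃ F : Finset (Finset V), #F ≤ 3 * #P ^ 3 ∧ ∀ Y ∈ badTriples H η P,
      eH H Y.1 Y.2.1 Y.2.2 ^ 2 / boxCard Y.1 Y.2.1 Y.2.2 + η ^ 2 * boxCard Y.1 Y.2.1 Y.2.2 ≤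
        energy H (atomise Y.1 F).parts (atomise Y.2.1 F).parts (atomise Y.2.2 F).parts := by
  have hwitness : ∀ Y ∈ badTriples H η P, ∃ X₁ X₂ X₃ : Finset V,
      X₁ ⊆ Y.1 ∧ X₂ ⊆ Y.2.1 ∧ X₃ ⊆ Y.2.2 ∧
      η * (Y.1.card : ℝ) * (Y.2.1.card : ℝ) * (Y.2.2.card : ℝ) <
        |eH H X₁ X₂ X₃ -
          dH H Y.1 Y.2.1 Y.2.2 * (X₁.card : ℝ) * (X₂.card : ℝ) * (X₃.card : ℝ)| := by
    intro Y hY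
    have hY := (mem_filter.1 hY).2
    simp only [weakQuasi, not_forall, not_le, exists_prop] at hY
    obtain ⟨X₁, h₁, X₂, h₂, X₃, h₃, hlt⟩ := hY
    exact ⟨X₁, X₂, X₃, h₁, h₂, h₃, hlt⟩
  choose! X₁ X₂ X₃ hX₁ hX₂ hX₃ hdev using hwitness
  refine ⟨(badTriples H η P).biUnion fun Y => {X₁ Y, X₂ Y, X₃ Y}, ?_, fun Y hY => ?_⟩
  · calc _ ≤ ∑ Y ∈ badTriples H η P, #({X₁ Y, X₂ Y, X₃ Y} : Finset (Finset V)) :=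
          card_biUnion_le
      _ ≤ ∑ _Y ∈ badTriples H η P, 3 := sum_le_sum fun _ _ => card_le_three
      _ = 3 * #(badTriples H η P) := by rw [sum_const, smul_eq_mul, mul_comm]
      _ ≤ 3 * #P ^ 3 := by
        gcongr
        exact (card_filter_le _ _).trans_eq (by simp [card_product, pow_succ, mul_assoc])
  have hmem (X : Finset V) (hX : X ∈ ({X₁ Y, X₂ Y, X₃ Y} : Finset (Finset V))) :
      X ∈ (badTriples H η P).biUnion fun Y => {X₁ Y, X₂ Y, X₃ Y} :=
    mem_biUnion.2 ⟨Y, hY, hX⟩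
  exact sq_div_add_sq_mul_le_energy_atomise H (hmem _ (by simp)) (hmem _ (by simp))
    (hmem _ (by simp)) (hX₁ Y hY) (hX₂ Y hY) (hX₃ Y hY) hη (hdev Y hY)

def refineAlong {s : Finset V} (P : Finpartition s) (F : Finset (Finset V)) : Finpartition s :=
  P.bind fun Y _ => atomise Y F

theorem card_refineAlong_le {s : Finset V} (P : Finpartition s) (F : Finset (Finset V)) :
    #(refineAlong P F).parts ≤ #P.parts * 2 ^ #F := by
  rw [refineAlong, card_bind]
  calc ∑ Y ∈ P.parts.attach, #(atomise Y.1 F).parts ≤ ∑ _Y ∈ P.parts.attach, 2 ^ #F :=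
        sum_le_sum fun _ _ => card_atomise_le
    _ = #P.parts * 2 ^ #F := by simp

theorem energy_refineAlong (H : Finset (Finset V)) {s : Finset V} (P : Finpartition s)
    (F : Finset (Finset V)) :
    energy H (refineAlong P F).parts (refineAlong P F).parts (refineAlong P F).parts =
      ∑ Y ∈ P.parts ×ˢ P.parts ×ˢ P.parts,
        energy H (atomise Y.1 F).parts (atomise Y.2.1 F).parts (atomise Y.2.2 F).parts := by
  have hparts : (refineAlong P F).parts = P.parts.biUnion fun Y => (atomise Y F).parts := by
    ext Z
    simp [refineAlong]
  have hdisj : (P.parts : Set (Finset V)).PairwiseDisjoint fun Y => (atomise Y F).parts := by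
    intro Y hY Y' hY' hne
    refine disjoint_left.2 fun Z hZ hZ' => hne ?_
    obtain ⟨x, hx⟩ := (atomise Y F).nonempty_of_mem_parts hZ
    exact P.eq_of_mem_parts hY hY' ((atomise Y F).le hZ hx) ((atomise Y' F).le hZ' hx)
  simp only [energy, hparts, ← sum_product_biUnion hdisj hdisj hdisj]

theorem isVertexPartition_parts {s : Finset V} (P : Finpartition s) :
    IsVertexPartition P.parts s :=
  ⟨fun _ => P.le, fun _ => P.existsUnique_mem⟩

theorem card_parts_top_le_one (s : Finset V) : #(⊤ : Finpartition s).parts ≤ 1 :=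
  (card_le_card (parts_top_subset s)).trans_eq (card_singleton s)

end Energy

section Partitions

variable [DecidableEq V] [Fintype V]

def IsWeakQuasirandom (H : Finset (Finset V)) (η : ℝ) (QV : Finset (Finset V)) : Prop :=
  (1 - η) * ((Fintype.card V : ℝ) ^ 3) ≤
    (((Finset.univ : Finset (V × V × V)).filter fun p =>
      ∀ Y1 ∈ QV, ∀ Y2 ∈ QV, ∀ Y3 ∈ QV,
        p.1 ∈ Y1 → p.2.1 ∈ Y2 → p.2.2 ∈ Y3 → weakQuasi H Y1 Y2 Y3 η).card : ℝ)

theorem isWeakQuasirandom_of_half_le (H : Finset (Finset V)) {η : ℝ} (hη : 1 / 2 ≤ η)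
    (QV : Finset (Finset V)) : IsWeakQuasirandom H η QV := by
  rw [IsWeakQuasirandom, filter_true_of_mem fun _ _ _ _ _ _ _ _ _ _ _ =>
    weakQuasi_of_half_le H hη _ _ _]
  simp only [card_univ, Fintype.card_prod]
  push_cast
  nlinarith [pow_nonneg (Nat.cast_nonneg (α := ℝ) (Fintype.card V)) 3]

theorem mul_card_pow_lt_sum_boxCard_badTriples {H : Finset (Finset V)} {η : ℝ}
    {P : Finset (Finset V)} (hP : ¬ IsWeakQuasirandom H η P) :
    η * (Fintype.card V : ℝ) ^ 3 < ∑ Y ∈ badTriples H η P, boxCard Y.1 Y.2.1 Y.2.2 := by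
  let good (p : V × V × V) : Prop := ∀ Y1 ∈ P, ∀ Y2 ∈ P, ∀ Y3 ∈ P,
    p.1 ∈ Y1 → p.2.1 ∈ Y2 → p.2.2 ∈ Y3 → weakQuasi H Y1 Y2 Y3 η
  have hgood : (#(univ.filter good) : ℝ) < (1 - η) * Fintype.card V ^ 3 := not_le.1 hP
  have hcover : univ.filter (fun p => ¬ good p) ⊆
      (badTriples H η P).biUnion fun Y => Y.1 ×ˢ Y.2.1 ×ˢ Y.2.2 := by
    intro p hp
    simp only [good, mem_filter, mem_univ, true_and, not_forall] at hp
    obtain ⟨Y1, hY1, Y2, hY2, Y3, hY3, hp1, hp2, hp3, hbad⟩ := hp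
    exact mem_biUnion.2 ⟨(Y1, Y2, Y3), by simp [badTriples, *], by simp [*]⟩
  have hbad : (#(univ.filter fun p => ¬ good p) : ℝ) ≤
      ∑ Y ∈ badTriples H η P, boxCard Y.1 Y.2.1 Y.2.2 := by
    refine (Nat.cast_le.2 ((card_le_card hcover).trans card_biUnion_le)).trans_eq ?_
    push_cast [card_product, boxCard, mul_assoc]
    rfl
  have hcount : (#(univ.filter good) : ℝ) + #(univ.filter fun p => ¬ good p) =
      Fintype.card V ^ 3 := by
    rw [← Nat.cast_add, card_filter_add_card_filter_not, card_univ, Fintype.card_prod,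
      Fintype.card_prod]
    push_cast
    ring
  linarith

theorem energy_le_card_pow (H : Finset (Finset V)) (P : Finpartition (univ : Finset V)) :
    energy H P.parts P.parts P.parts ≤ (Fintype.card V : ℝ) ^ 3 := by
  have hterm (Z : Finset V × Finset V × Finset V) :
      eH H Z.1 Z.2.1 Z.2.2 ^ 2 / boxCard Z.1 Z.2.1 Z.2.2 ≤ boxCard Z.1 Z.2.1 Z.2.2 := by
    have he := eH_nonneg H Z.1 Z.2.1 Z.2.2
    have hv := eH_le_boxCard H Z.1 Z.2.1 Z.2.2
    exact div_le_of_le_mul₀ (he.trans hv) (he.trans hv) (by nlinarith)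
  calc energy H P.parts P.parts P.parts ≤ ∑ Z ∈ P.parts ×ˢ P.parts ×ˢ P.parts,
        boxCard Z.1 Z.2.1 Z.2.2 := sum_le_sum fun Z _ => hterm Z
    _ = (Fintype.card V : ℝ) ^ 3 := by
      rw [sum_boxCard_product P.disjoint P.disjoint P.disjoint, P.biUnion_parts, boxCard,
        card_univ]
      ring

theorem exists_card_le_and_energy_add_le (H : Finset (Finset V)) {η : ℝ} (hη : 0 ≤ η)
    (P : Finpartition (univ : Finset V)) (hP : ¬ IsWeakQuasirandom H η P.parts) :
    ∃ Q : Finpartition (univ : Finset V), #Q.parts ≤ #P.parts * 2 ^ (3 * #P.parts ^ 3) ∧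
      energy H P.parts P.parts P.parts + η ^ 3 * (Fintype.card V : ℝ) ^ 3 ≤
        energy H Q.parts Q.parts Q.parts := by
  obtain ⟨F, hF, hgain⟩ := exists_card_le_and_sq_div_add_sq_mul_le_energy_atomise H hη P.parts
  set bad := badTriples H η P.parts
  have hlocal : ∀ Y ∈ P.parts ×ˢ P.parts ×ˢ P.parts,
      eH H Y.1 Y.2.1 Y.2.2 ^ 2 / boxCard Y.1 Y.2.1 Y.2.2 +
          (if Y ∈ bad then η ^ 2 * boxCard Y.1 Y.2.1 Y.2.2 else 0) ≤
        energy H (atomise Y.1 F).parts (atomise Y.2.1 F).parts (atomise Y.2.2 F).parts := by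
    intro Y _
    split_ifs with hY
    · exact hgain Y hY
    · rw [add_zero]
      exact sq_div_le_energy H _ _ _
  refine ⟨refineAlong P F, (card_refineAlong_le P F).trans (by gcongr; norm_num), ?_⟩
  have hcount := mul_card_pow_lt_sum_boxCard_badTriples hP
  calc energy H P.parts P.parts P.parts + η ^ 3 * (Fintype.card V : ℝ) ^ 3
      ≤ energy H P.parts P.parts P.parts + η ^ 2 * ∑ Y ∈ bad, boxCard Y.1 Y.2.1 Y.2.2 := by
        rw [pow_succ, mul_assoc]
        have := mul_le_mul_of_nonneg_left hcount.le (sq_nonneg η)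
        linarith
    _ = ∑ Y ∈ P.parts ×ˢ P.parts ×ˢ P.parts, (eH H Y.1 Y.2.1 Y.2.2 ^ 2 /
          boxCard Y.1 Y.2.1 Y.2.2 + if Y ∈ bad then η ^ 2 * boxCard Y.1 Y.2.1 Y.2.2 else 0) := by
        have hbad : P.parts ×ˢ P.parts ×ˢ P.parts ∩ bad = bad :=
          inter_eq_right.2 (filter_subset _ _)
        rw [sum_add_distrib, sum_ite_mem, hbad, mul_sum]
        rfl
    _ ≤ _ := sum_le_sum hlocal
    _ = _ := (energy_refineAlong H P F).symm

theorem exists_partition_card_le_tower (H : Finset (Finset V)) {η : ℝ} (hη : 0 ≤ η) (s : ℕ) :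
    ∃ P : Finpartition (univ : Finset V), #P.parts ≤ tower (5 * s) ∧
      (IsWeakQuasirandom H η P.parts ∨
        s * (η ^ 3 * (Fintype.card V : ℝ) ^ 3) ≤ energy H P.parts P.parts P.parts) := by
  induction s with
  | zero =>
    refine ⟨⊤, card_parts_top_le_one _, Or.inr ?_⟩
    simpa using energy_nonneg H _ _ _
  | succ s ih =>
    obtain ⟨P, hcard, hP⟩ := ih
    by_cases hgood : IsWeakQuasirandom H η P.parts
    · exact ⟨P, hcard.trans (tower_mono (by omega)), Or.inl hgood⟩
    obtain ⟨Q, hQcard, hQ⟩ := exists_card_le_and_energy_add_le H hη P hgood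
    refine ⟨Q, ?_, Or.inr ?_⟩
    · calc #Q.parts ≤ #P.parts * 2 ^ (3 * #P.parts ^ 3) := hQcard
        _ ≤ twr 5 #P.parts := mul_two_pow_le_twr_five _
        _ ≤ twr 5 (tower (5 * s)) := twr_mono 5 hcard
        _ = tower (5 * (s + 1)) := by rw [tower, tower, ← twr_add, mul_add_one, add_comm]
    · push_cast
      linarith [hP.resolve_left hgood]

theorem exists_isWeakQuasirandom (H : Finset (Finset V)) {η : ℝ} (hη : 0 < η) {s : ℕ}
    (hs : η⁻¹ ^ 3 < s) :
    ∃ P : Finpartition (univ : Finset V), #P.parts ≤ tower (5 * s) ∧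
      IsWeakQuasirandom H η P.parts := by
  obtain ⟨P, hcard, hP | hE⟩ := exists_partition_card_le_tower H hη.le s
  · exact ⟨P, hcard, hP⟩
  refine ⟨P, hcard, ?_⟩
  have hsη : 1 < s * η ^ 3 := by
    rwa [inv_pow, inv_lt_iff_one_lt_mul₀ (by positivity)] at hs
  have hN : (Fintype.card V : ℝ) ^ 3 = 0 :=
    le_antisymm (by nlinarith [energy_le_card_pow H P]) (by positivity)
  rw [IsWeakQuasirandom, hN, mul_zero]
  exact Nat.cast_nonneg _

end Partitions

end WeakRegularity

/-- Chung's weak regularity lemma for 3-graphs, with tower-type bounds. -/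
theorem chung_weak_regularity :
    ∃ c : ℕ, 0 < c ∧ ∀ η : ℝ, 0 < η →
      ∃ K : ℕ, K ≤ tower ⌈η⁻¹ ^ c⌉₊ ∧
        ∀ (V : Type) [Fintype V] [DecidableEq V] (H : Finset (Finset V)), Is3Graph H →
          ∃ QV : Finset (Finset V), IsVertexPartition QV Finset.univ ∧ QV.card ≤ K ∧
            (1 - η) * ((Fintype.card V : ℝ) ^ 3) ≤
              (((Finset.univ : Finset (V × V × V)).filter fun p =>
                ∀ Y1 ∈ QV, ∀ Y2 ∈ QV, ∀ Y3 ∈ QV,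
                  p.1 ∈ Y1 → p.2.1 ∈ Y2 → p.2.2 ∈ Y3 →
                    weakQuasi H Y1 Y2 Y3 η).card : ℝ) := by
  refine ⟨6, by norm_num, fun η hη => ?_⟩
  rcases lt_or_ge η (1 / 2) with hsmall | hlarge
  · obtain ⟨s, hs, hsK⟩ :=
      WeakRegularity.exists_nat_gt_pow_three_and_five_mul_le_ceil (x := η⁻¹)
        (by rw [le_inv_comm₀ two_pos hη]; linarith)
    refine ⟨tower (5 * s), WeakRegularity.tower_mono hsK, fun V _ _ H _ => ?_⟩
    obtain ⟨P, hcard, hP⟩ := WeakRegularity.exists_isWeakQuasirandom H hη hs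
    exact ⟨P.parts, WeakRegularity.isVertexPartition_parts P, hcard, hP⟩
  · refine ⟨1, WeakRegularity.le_twr _ 1, fun V _ _ H _ => ?_⟩
    exact ⟨(⊤ : Finpartition Finset.univ).parts, WeakRegularity.isVertexPartition_parts _,
      WeakRegularity.card_parts_top_le_one _,
      WeakRegularity.isWeakQuasirandom_of_half_le H hlarge _⟩
end
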